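/- arXiv:1902.04439 — 9 statements merged into one kernel-verified Lean document; each statement's English description precedes it below -/
import Mathlib

section
/- The vector π defined by π_k = e^{−2εk} for k = 0,…,N−1 satisfies T π = π; that is, the optimal asymptotic cooling state is a fixed point (eigenvector with eigenvalue 1) of the TSAC transition matrix. -/
open Real Matrix Finset

/-- The TSAC transition matrix `T` on the diagonal of the computation-qubit density
matrix: `N = 2^n`, `z = e^ε + e^{-ε}`, `T 0 0 = T 0 1 = e^ε/z`,
`T (N-1) (N-2) = T (N-1) (N-1) = e^{-ε}/z`, and for `0 < i < N-1`,
`T i (i-1) = e^{-ε}/z`, `T i (i+1) = e^ε/z`; all other entries vanish. -/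
noncomputable def Tmat (n : ℕ) (ε : ℝ) : Matrix (Fin (2 ^ n)) (Fin (2 ^ n)) ℝ :=
  fun i j =>
    if (i : ℕ) = 0 then
      if (j : ℕ) ≤ 1 then Real.exp ε / (Real.exp ε + Real.exp (-ε)) else 0
    else if (i : ℕ) = 2 ^ n - 1 then
      if 2 ^ n - 2 ≤ (j : ℕ) then Real.exp (-ε) / (Real.exp ε + Real.exp (-ε)) else 0
    else if (j : ℕ) + 1 = (i : ℕ) then Real.exp (-ε) / (Real.exp ε + Real.exp (-ε))
    else if (j : ℕ) = (i : ℕ) + 1 then Real.exp ε / (Real.exp ε + Real.exp (-ε))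
    else 0

/-! Every row of `T` has exactly two nonzero entries, and `π` satisfies the detailed balance
relation `e^{-ε} π_k = e^ε π_{k+1}`. In an interior row this trades `e^{-ε} π_{i-1}` for
`e^ε π_i` and `e^ε π_{i+1}` for `e^{-ε} π_i`; in the two boundary rows, whose two weights
coincide, it trades one of the two terms. Either way the row evaluates to
`(e^ε + e^{-ε}) π_i / z = π_i`. -/

theorem Fin.sum_eq_add_of_val {N : ℕ} {M : Type*} [AddCommMonoid M] {f : Fin N → M}
    {a b : ℕ} (ha : a < N) (hb : b < N) (hab : a ≠ b)
    (hf : ∀ c : Fin N, (c : ℕ) ≠ a → (c : ℕ) ≠ b → f c = 0) :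
    ∑ c, f c = f ⟨a, ha⟩ + f ⟨b, hb⟩ :=
  Fintype.sum_eq_add _ _ (by simpa [Fin.ext_iff] using hab)
    fun c hc => hf c (fun h => hc.1 (Fin.ext h)) (fun h => hc.2 (Fin.ext h))

section Tmat

variable {n : ℕ} {ε : ℝ} (v : ℕ → ℝ)

local notation "z" => Real.exp ε + Real.exp (-ε)

theorem Tmat_mulVec_apply_of_val_eq_zero (hn : 1 ≤ n) {i : Fin (2 ^ n)} (hi : (i : ℕ) = 0) :
    (Tmat n ε *ᵥ fun k => v k) i = Real.exp ε / z * (v 0 + v 1) := by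
  have hN : 2 ≤ 2 ^ n := Nat.le_self_pow (by omega) 2
  rw [mulVec, dotProduct,
    Fin.sum_eq_add_of_val (a := 0) (b := 1) (by omega) (by omega) (by omega)]
  · simp only [Tmat, hi]
    split_ifs <;> first | omega | ring1
  · intro c hc0 hc1
    simp only [Tmat, hi]
    split_ifs <;> first | omega | exact zero_mul _

theorem Tmat_mulVec_apply_of_val_eq_last (hn : 1 ≤ n) {i : Fin (2 ^ n)}
    (hi : (i : ℕ) = 2 ^ n - 1) :
    (Tmat n ε *ᵥ fun k => v k) i = Real.exp (-ε) / z * (v (2 ^ n - 2) + v (2 ^ n - 1)) := by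
  have hN : 2 ≤ 2 ^ n := Nat.le_self_pow (by omega) 2
  rw [mulVec, dotProduct,
    Fin.sum_eq_add_of_val (a := 2 ^ n - 2) (b := 2 ^ n - 1) (by omega) (by omega) (by omega)]
  · simp only [Tmat, hi]
    split_ifs <;> first | omega | ring1
  · intro c hc0 hc1
    simp only [Tmat, hi]
    have := c.isLt
    split_ifs <;> first | omega | exact zero_mul _

theorem Tmat_mulVec_apply_of_interior {i : Fin (2 ^ n)} (hi0 : (i : ℕ) ≠ 0)
    (hi : (i : ℕ) ≠ 2 ^ n - 1) :
    (Tmat n ε *ᵥ fun k => v k) i =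
      Real.exp (-ε) / z * v (i - 1) + Real.exp ε / z * v (i + 1) := by
  have := i.isLt
  rw [mulVec, dotProduct,
    Fin.sum_eq_add_of_val (a := i - 1) (b := i + 1) (by omega) (by omega) (by omega)]
  · simp only [Tmat]
    split_ifs <;> first | omega | ring1
  · intro c hc0 hc1
    simp only [Tmat]
    split_ifs <;> first | omega | exact zero_mul _

theorem Tmat_mulVec_eq_self_of_detailed_balance (hn : 1 ≤ n)
    (hv : ∀ k, Real.exp (-ε) * v k = Real.exp ε * v (k + 1)) :
    (Tmat n ε *ᵥ fun k => v k) = fun k : Fin (2 ^ n) => v k := by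
  funext i
  have hz : z ≠ 0 := by positivity
  by_cases hi0 : (i : ℕ) = 0
  · rw [Tmat_mulVec_apply_of_val_eq_zero v hn hi0, hi0]
    field_simp
    linear_combination -(hv 0)
  obtain ⟨k, hk⟩ : ∃ k, (i : ℕ) = k + 1 := Nat.exists_eq_succ_of_ne_zero hi0
  by_cases hi : (i : ℕ) = 2 ^ n - 1
  · rw [Tmat_mulVec_apply_of_val_eq_last v hn hi, hk, show 2 ^ n - 2 = k by omega,
      show 2 ^ n - 1 = k + 1 by omega]
    field_simp
    linear_combination hv k
  · rw [Tmat_mulVec_apply_of_interior v hi0 hi, hk, Nat.add_sub_cancel]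
    field_simp
    linear_combination hv k - hv (k + 1)

end Tmat

theorem tsac_oas_fixed_point_general (n : ℕ) (hn : 1 ≤ n) (ε : ℝ) :
    (Tmat n ε).mulVec (fun k : Fin (2 ^ n) => Real.exp (-2 * ε * (k : ℕ))) =
      fun k : Fin (2 ^ n) => Real.exp (-2 * ε * (k : ℕ)) :=
  Tmat_mulVec_eq_self_of_detailed_balance (fun m : ℕ => Real.exp (-2 * ε * m)) hn fun k => by
    rw [← Real.exp_add, ← Real.exp_add]
    push_cast
    ring_nf

/-- The vector `π` with `π k = e^{-2εk}` is a fixed point of the TSAC transition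
matrix: `T π = π`, i.e. the optimal asymptotic cooling state is an eigenvector of `T`
with eigenvalue `1`. -/
theorem tsac_oas_fixed_point (n : ℕ) (hn : 1 ≤ n) (ε : ℝ) (hε : 0 < ε) :
    (Tmat n ε).mulVec (fun k : Fin (2 ^ n) => Real.exp (-2 * ε * (k : ℕ))) =
      fun k : Fin (2 ^ n) => Real.exp (-2 * ε * (k : ℕ)) :=
  tsac_oas_fixed_point_general n hn ε
end

section
/- The set of complex eigenvalues of T is exactly {1} ∪ {2·cos(kπ/N)/z : k = 1, 2, …, N−1}. These N real numbers are pairwise distinct, so T has N distinct real eigenvalues and is diagonalizable over ℝ. -/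
/-!
Conjugating `T` by `diag (e^{-ε i})` makes it symmetric tridiagonal with off-diagonal entries
`1/z`, so the eigenvectors of `T` are `e^{-ε i} (s (i+1) - e^ε s i)` for solutions `s` of the
three-term recurrence `s (m+2) + s m = 2 c s (m+1)` with `s 0 = 0`, the eigenvalue being `2c/z`;
the difference `s (i+1) - e^ε s i` is what makes the reflecting bottom row hold. The top row
then asks for `s N = 0` or `2c = z`. The first gives the modes `s i = sin (i k π / N)`,
`c = cos (k π / N)`, the second the stationary mode `s i = sinh (i ε)`, `c = cosh ε`. As
`z = 2 cosh ε > 2`, these `N` eigenvalues are distinct, so the eigenvectors are the columns of an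
invertible `P` with `T P = P D`, which gives both the diagonalization and the spectrum over `ℂ`.
-/

open Real Matrix Finset

namespace Matrix

theorem mulVec_apply_eq_add_of_support {l m R : Type*} [Fintype m] [DecidableEq m]
    [NonUnitalNonAssocSemiring R] (M : Matrix l m R) (v : m → R) {i : l} {a b : m} (hab : a ≠ b)
    (hM : ∀ j, j ≠ a → j ≠ b → M i j = 0) :
    (M *ᵥ v) i = M i a * v a + M i b * v b :=
  Fintype.sum_eq_add a b hab fun j hj => by simp [hM j hj.1 hj.2]

variable {ι K : Type*} [Fintype ι] [DecidableEq ι] [Field K]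

theorem isUnit_of_eigenvector_cols {A : Matrix ι ι K} {μ : ι → K} {v : ι → ι → K}
    (hμ : Function.Injective μ) (hv : ∀ k, v k ≠ 0) (hAv : ∀ k, A *ᵥ v k = μ k • v k) :
    IsUnit (of fun i k => v k i) :=
  linearIndependent_cols_iff_isUnit.1 <|
    Module.End.eigenvectors_linearIndependent' (mulVecLin A) μ hμ v fun k =>
      ⟨Module.End.mem_eigenspace_iff.2 (hAv k), hv k⟩

theorem mul_eigenvector_cols {A : Matrix ι ι K} {μ : ι → K} {v : ι → ι → K}
    (hAv : ∀ k, A *ᵥ v k = μ k • v k) :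
    A * (of fun i k => v k i) = (of fun i k => v k i) * diagonal μ := by
  ext i k
  have h := congrFun (hAv k) i
  rw [Pi.smul_apply, smul_eq_mul] at h
  rw [mul_diagonal, of_apply, mul_comm (v k i), ← h]
  rfl

theorem spectrum_eq_range_of_mul_eq_mul_diagonal {A P : Matrix ι ι K} {d : ι → K}
    (hP : IsUnit P) (h : A * P = P * diagonal d) : spectrum K A = Set.range d := by
  obtain ⟨u, rfl⟩ := hP
  rw [(Units.eq_mul_inv_iff_mul_eq u).2 h, spectrum.units_conjugate, spectrum_diagonal]

theorem spectrum_map_eq_range_of_mul_eq_mul_diagonal {L : Type*} [Field L] [Algebra K L]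
    {A P : Matrix ι ι K} {d : ι → K} (hP : IsUnit P) (h : A * P = P * diagonal d) :
    spectrum L (A.map (algebraMap K L)) = Set.range (algebraMap K L ∘ d) := by
  refine spectrum_eq_range_of_mul_eq_mul_diagonal (P := P.map (algebraMap K L))
    (hP.map (algebraMap K L).mapMatrix) ?_
  rw [← Matrix.map_mul, h, Matrix.map_mul, diagonal_map (map_zero _)]
  rfl

theorem eq_mul_diagonal_mul_inv {A P : Matrix ι ι K} {d : ι → K} (hP : IsUnit P.det)
    (h : A * P = P * diagonal d) : A = P * diagonal d * P⁻¹ := by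
  rw [← h]
  exact (mul_nonsing_inv_cancel_right _ _ hP).symm

end Matrix

section TmatRows

variable {n : ℕ} {ε : ℝ} (u : ℕ → ℝ)

theorem Tmat_mulVec_apply_of_eq_zero (hn : 1 ≤ n) {i : Fin (2 ^ n)} (hi : (i : ℕ) = 0) :
    (Tmat n ε *ᵥ fun j => u j) i = exp ε / (exp ε + exp (-ε)) * (u 0 + u 1) := by
  have hN : 2 ≤ 2 ^ n := Nat.le_self_pow (by omega) 2
  rw [Matrix.mulVec_apply_eq_add_of_support _ _ (a := ⟨0, by omega⟩) (b := ⟨1, by omega⟩)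
    (by simp [Fin.ext_iff])]
  · simp only [Tmat]
    split_ifs <;> first | omega | ring
  · intro j hja hjb
    simp only [ne_eq, Fin.ext_iff] at hja hjb
    simp only [Tmat]
    split_ifs <;> first | omega | rfl

theorem Tmat_mulVec_apply_of_eq_succ_of_lt {i : Fin (2 ^ n)} {m : ℕ} (hi : (i : ℕ) = m + 1)
    (hm : m + 2 < 2 ^ n) :
    (Tmat n ε *ᵥ fun j => u j) i =
      exp (-ε) / (exp ε + exp (-ε)) * u m + exp ε / (exp ε + exp (-ε)) * u (m + 2) := by
  rw [Matrix.mulVec_apply_eq_add_of_support _ _ (a := ⟨m, by omega⟩) (b := ⟨m + 2, by omega⟩)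
    (by simp [Fin.ext_iff])]
  · simp only [Tmat]
    split_ifs <;> first | omega | ring
  · intro j hja hjb
    simp only [ne_eq, Fin.ext_iff] at hja hjb
    simp only [Tmat]
    split_ifs <;> first | omega | rfl

theorem Tmat_mulVec_apply_of_eq_succ_of_eq {i : Fin (2 ^ n)} {m : ℕ} (hi : (i : ℕ) = m + 1)
    (hm : m + 2 = 2 ^ n) :
    (Tmat n ε *ᵥ fun j => u j) i = exp (-ε) / (exp ε + exp (-ε)) * (u m + u (m + 1)) := by
  rw [Matrix.mulVec_apply_eq_add_of_support _ _ (a := ⟨m, by omega⟩) (b := ⟨m + 1, by omega⟩)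
    (by simp [Fin.ext_iff])]
  · simp only [Tmat]
    split_ifs <;> first | omega | ring
  · intro j hja hjb
    simp only [ne_eq, Fin.ext_iff] at hja hjb
    simp only [Tmat]
    split_ifs <;> first | omega | rfl

end TmatRows

noncomputable def twistedDiff (a : ℝ) (s : ℕ → ℝ) (i : ℕ) : ℝ := a⁻¹ ^ i * (s (i + 1) - a * s i)

section TwistedDiff

variable {a c : ℝ} {s : ℕ → ℝ}

theorem twistedDiff_recurrence (ha : a ≠ 0) (hs : ∀ m, s (m + 2) + s m = 2 * c * s (m + 1))
    (m : ℕ) :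
    a⁻¹ * twistedDiff a s m + a * twistedDiff a s (m + 2) = 2 * c * twistedDiff a s (m + 1) := by
  have h₁ := hs m
  have h₂ : s (m + 2 + 1) + s (m + 1) = 2 * c * s (m + 2) := hs (m + 1)
  simp only [twistedDiff, pow_succ]
  field_simp
  linear_combination h₂ - a * h₁

theorem twistedDiff_first (ha : a ≠ 0) (hs : ∀ m, s (m + 2) + s m = 2 * c * s (m + 1))
    (h₀ : s 0 = 0) :
    a * (twistedDiff a s 0 + twistedDiff a s 1) = 2 * c * twistedDiff a s 0 := by
  have h := hs 0
  simp only [twistedDiff, pow_zero, pow_one, one_mul, h₀, mul_zero, sub_zero, add_zero,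
    Nat.reduceAdd] at h ⊢
  field_simp
  linear_combination h

theorem twistedDiff_last (ha : a ≠ 0) (hs : ∀ m, s (m + 2) + s m = 2 * c * s (m + 1)) (M : ℕ)
    (hM : (a + a⁻¹ - 2 * c) * s (M + 1) = 0) :
    a⁻¹ * twistedDiff a s M = a * twistedDiff a s (M + 1) := by
  have h := hs M
  simp only [twistedDiff, pow_succ, inv_pow]
  field_simp at hM ⊢
  linear_combination hM - a * h

end TwistedDiff

theorem Tmat_mulVec_twistedDiff {n : ℕ} {ε c : ℝ} {s : ℕ → ℝ} (hn : 1 ≤ n)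
    (hs : ∀ m, s (m + 2) + s m = 2 * c * s (m + 1)) (h₀ : s 0 = 0)
    (hN : (cosh ε - c) * s (2 ^ n) = 0) :
    (Tmat n ε *ᵥ fun i => twistedDiff (exp ε) s i) =
      (c / cosh ε) • fun i : Fin (2 ^ n) => twistedDiff (exp ε) s i := by
  have ha : exp ε ≠ 0 := exp_ne_zero ε
  have hcosh : cosh ε = (exp ε + (exp ε)⁻¹) / 2 := by rw [cosh_eq, Real.exp_neg]
  ext i
  rw [Pi.smul_apply, smul_eq_mul, hcosh]
  obtain hi | ⟨m, hi⟩ : (i : ℕ) = 0 ∨ ∃ m, (i : ℕ) = m + 1 :=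
    (Nat.eq_zero_or_eq_succ_pred _).imp id fun h => ⟨_, h⟩
  · rw [Tmat_mulVec_apply_of_eq_zero _ hn hi, Real.exp_neg, hi]
    have h := twistedDiff_first ha hs h₀
    field_simp at h ⊢
    linear_combination h
  obtain hm | hm : m + 2 < 2 ^ n ∨ m + 2 = 2 ^ n := by omega
  · rw [Tmat_mulVec_apply_of_eq_succ_of_lt _ hi hm, Real.exp_neg, hi]
    have h := twistedDiff_recurrence ha hs m
    field_simp at h ⊢
    linear_combination h
  · rw [Tmat_mulVec_apply_of_eq_succ_of_eq _ hi hm, Real.exp_neg, hi]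
    have hM : (exp ε + (exp ε)⁻¹ - 2 * c) * s (m + 1 + 1) = 0 := by
      rw [← hm, hcosh] at hN; linear_combination 2 * hN
    have h := twistedDiff_recurrence ha hs m
    have h' := twistedDiff_last ha hs (m + 1) hM
    field_simp at h h' ⊢
    linear_combination h + h'

noncomputable def tsacCos (n : ℕ) (ε : ℝ) (k : ℕ) : ℝ :=
  if k = 0 then cosh ε else cos (k * π / 2 ^ n)

noncomputable def tsacSin (n : ℕ) (ε : ℝ) (k i : ℕ) : ℝ :=
  if k = 0 then sinh (i * ε) else sin (i * (k * π / 2 ^ n))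

noncomputable def tsacEigenvalue (n : ℕ) (ε : ℝ) (k : ℕ) : ℝ := tsacCos n ε k / cosh ε

noncomputable def tsacEigenvector (n : ℕ) (ε : ℝ) (k : ℕ) (i : Fin (2 ^ n)) : ℝ :=
  twistedDiff (exp ε) (tsacSin n ε k) i

section TsacModes

variable {n : ℕ} {ε : ℝ} {k : ℕ}

theorem tsacSin_recurrence (m : ℕ) :
    tsacSin n ε k (m + 2) + tsacSin n ε k m = 2 * tsacCos n ε k * tsacSin n ε k (m + 1) := by
  unfold tsacSin tsacCos
  split_ifs
  · have h := sinh_add ((m + 1) * ε) ε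
    have h' := sinh_sub ((m + 1) * ε) ε
    push_cast
    rw [show ((m : ℝ) + 2) * ε = (m + 1) * ε + ε by ring, h,
      show (m : ℝ) * ε = (m + 1) * ε - ε by ring, h']
    ring
  · set θ := (k : ℝ) * π / 2 ^ n
    push_cast
    rw [show ((m : ℝ) + 2) * θ = (m + 1) * θ + θ by ring, sin_add,
      show (m : ℝ) * θ = (m + 1) * θ - θ by ring, sin_sub]
    ring

theorem tsacSin_zero : tsacSin n ε k 0 = 0 := by
  simp [tsacSin]

theorem tsacSin_two_pow : (cosh ε - tsacCos n ε k) * tsacSin n ε k (2 ^ n) = 0 := by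
  unfold tsacSin tsacCos
  split_ifs
  · rw [sub_self, zero_mul]
  · rw [show ((2 ^ n : ℕ) : ℝ) * (k * π / 2 ^ n) = k * π by push_cast; field_simp,
      sin_nat_mul_pi, mul_zero]

theorem Tmat_mulVec_tsacEigenvector (hn : 1 ≤ n) :
    Tmat n ε *ᵥ tsacEigenvector n ε k = tsacEigenvalue n ε k • tsacEigenvector n ε k :=
  Tmat_mulVec_twistedDiff hn tsacSin_recurrence tsacSin_zero tsacSin_two_pow

theorem tsacEigenvector_ne_zero (hε : 0 < ε) (hk : k < 2 ^ n) :
    tsacEigenvector n ε k ≠ 0 := by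
  refine Function.ne_iff.2 ⟨⟨0, Nat.two_pow_pos n⟩, ?_⟩
  simp only [tsacEigenvector, twistedDiff, tsacSin_zero, pow_zero, mul_zero, sub_zero, one_mul,
    zero_add, Pi.zero_apply]
  unfold tsacSin
  split_ifs with hk0
  · simpa using (sinh_pos_iff.2 hε).ne'
  · have hθ : (k : ℝ) * π / 2 ^ n < π := by
      rw [div_lt_iff₀ (by positivity), mul_comm]
      exact mul_lt_mul_of_pos_left (by exact_mod_cast hk) pi_pos
    simpa using (sin_pos_of_pos_of_lt_pi (by positivity) hθ).ne'

end TsacModes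

theorem two_mul_cos_div_exp_add_exp_neg (x ε : ℝ) :
    2 * cos x / (exp ε + exp (-ε)) = cos x / cosh ε := by
  rw [cosh_eq, div_div_eq_mul_div, mul_comm]

theorem cos_div_cosh_ne_one {ε : ℝ} (hε : ε ≠ 0) (x : ℝ) : cos x / cosh ε ≠ 1 := by
  rw [Ne, div_eq_one_iff_eq (cosh_pos ε).ne']
  exact ((cos_le_one x).trans_lt (one_lt_cosh.2 hε)).ne

theorem injOn_cos_nat_mul_pi_div (N : ℕ) :
    Set.InjOn (fun k : ℕ => cos (k * π / N)) {k | k ≤ N} := by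
  intro a ha b hb hab
  have hmem : ∀ c : ℕ, c ≤ N → (c : ℝ) * π / N ∈ Set.Icc 0 π := fun c hc =>
    ⟨by positivity, div_le_of_le_mul₀ (Nat.cast_nonneg N) pi_pos.le
      (by rw [mul_comm]; gcongr)⟩
  have h := injOn_cos (hmem a ha) (hmem b hb) hab
  rcases N.eq_zero_or_pos with rfl | hN
  · simp_all
  · field_simp at h
    exact_mod_cast h

theorem injOn_cos_div_cosh (n : ℕ) (ε : ℝ) :
    Set.InjOn (fun k : ℕ => cos (k * π / 2 ^ n) / cosh ε) {k | k ≤ 2 ^ n} := by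
  intro a ha b hb hab
  rw [div_left_inj' (cosh_pos ε).ne'] at hab
  exact injOn_cos_nat_mul_pi_div (2 ^ n) ha hb (by simpa using hab)

section TsacEigenvalue

variable {n : ℕ} {ε : ℝ}

theorem tsacEigenvalue_zero : tsacEigenvalue n ε 0 = 1 :=
  div_self (cosh_pos ε).ne'

theorem tsacEigenvalue_of_ne_zero {k : ℕ} (hk : k ≠ 0) :
    tsacEigenvalue n ε k = cos (k * π / 2 ^ n) / cosh ε := by
  rw [tsacEigenvalue, tsacCos, if_neg hk]

theorem tsacEigenvalue_injective (hε : 0 < ε) :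
    Function.Injective fun k : Fin (2 ^ n) => tsacEigenvalue n ε k := by
  intro a b hab
  simp only at hab
  obtain ha | ha := eq_or_ne (a : ℕ) 0 <;> obtain hb | hb := eq_or_ne (b : ℕ) 0
  · exact Fin.ext (ha.trans hb.symm)
  · rw [ha, tsacEigenvalue_of_ne_zero hb, tsacEigenvalue_zero] at hab
    exact absurd hab.symm (cos_div_cosh_ne_one hε.ne' _)
  · rw [hb, tsacEigenvalue_of_ne_zero ha, tsacEigenvalue_zero] at hab
    exact absurd hab (cos_div_cosh_ne_one hε.ne' _)
  · rw [tsacEigenvalue_of_ne_zero ha, tsacEigenvalue_of_ne_zero hb] at hab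
    exact Fin.ext (injOn_cos_div_cosh n ε a.isLt.le b.isLt.le hab)

theorem range_tsacEigenvalue (hn : 1 ≤ n) :
    Set.range (fun k : Fin (2 ^ n) => tsacEigenvalue n ε k) =
      insert 1 ((fun k : ℕ => cos (k * π / 2 ^ n) / cosh ε) '' {k | 1 ≤ k ∧ k ≤ 2 ^ n - 1}) := by
  have hN : 2 ≤ 2 ^ n := Nat.le_self_pow (by omega) 2
  ext x
  constructor
  · rintro ⟨k, rfl⟩
    obtain hk | hk := eq_or_ne (k : ℕ) 0
    · exact Or.inl (by simp only [hk, tsacEigenvalue_zero])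
    · exact Or.inr ⟨k, ⟨by omega, by omega⟩, (tsacEigenvalue_of_ne_zero hk).symm⟩
  · rintro (rfl | ⟨k, ⟨hk₁, hk₂⟩, rfl⟩)
    · exact ⟨⟨0, by omega⟩, tsacEigenvalue_zero⟩
    · exact ⟨⟨k, by omega⟩, tsacEigenvalue_of_ne_zero (k := k) (by omega)⟩

end TsacEigenvalue

/-- The set of complex eigenvalues of `T` (the spectrum of `T` over `ℂ`) is exactly
`{1} ∪ {2 cos(kπ/N)/z : k = 1, …, N-1}`; these `N` real numbers are pairwise
distinct, and `T` is diagonalizable over `ℝ`. -/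
theorem tsac_spectrum (n : ℕ) (hn : 1 ≤ n) (ε : ℝ) (hε : 0 < ε) :
    spectrum ℂ ((Tmat n ε).map (algebraMap ℝ ℂ)) =
        insert 1 ((fun k : ℕ =>
            ((2 * Real.cos (k * Real.pi / 2 ^ n) / (Real.exp ε + Real.exp (-ε)) : ℝ) : ℂ)) ''
          {k : ℕ | 1 ≤ k ∧ k ≤ 2 ^ n - 1}) ∧
    Set.InjOn (fun k : ℕ => 2 * Real.cos (k * Real.pi / 2 ^ n) / (Real.exp ε + Real.exp (-ε)))
      {k : ℕ | 1 ≤ k ∧ k ≤ 2 ^ n - 1} ∧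
    (∀ k : ℕ, 1 ≤ k → k ≤ 2 ^ n - 1 →
      2 * Real.cos (k * Real.pi / 2 ^ n) / (Real.exp ε + Real.exp (-ε)) ≠ 1) ∧
    ∃ P D : Matrix (Fin (2 ^ n)) (Fin (2 ^ n)) ℝ, IsUnit P.det ∧ D.IsDiag ∧
      Tmat n ε = P * D * P⁻¹ := by
  simp only [two_mul_cos_div_exp_add_exp_neg]
  have hAv (k : Fin (2 ^ n)) := Tmat_mulVec_tsacEigenvector (ε := ε) (k := k) hn
  have hP := isUnit_of_eigenvector_cols (tsacEigenvalue_injective hε)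
    (fun k => tsacEigenvector_ne_zero hε k.isLt) hAv
  have hTP := mul_eigenvector_cols hAv
  refine ⟨?_, ?_, fun k _ _ => cos_div_cosh_ne_one hε.ne' _, _, _,
    (isUnit_iff_isUnit_det _).1 hP, isDiag_diagonal _,
    eq_mul_diagonal_mul_inv ((isUnit_iff_isUnit_det _).1 hP) hTP⟩
  · rw [spectrum_map_eq_range_of_mul_eq_mul_diagonal hP hTP, Set.range_comp,
      range_tsacEigenvalue hn, Set.image_insert_eq, Set.image_image, map_one]
    rfl
  · exact (injOn_cos_div_cosh n ε).mono fun k hk => hk.2.trans (Nat.sub_le _ _)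
end

section
/- The eigenvalue 1 of T is simple, i.e., the eigenspace of T for eigenvalue 1 is one-dimensional and is spanned by the vector π with π_k = e^{−2εk}; moreover every complex eigenvalue λ of T with λ ≠ 1 satisfies |λ| ≤ 2/z < 1. -/
open Real Matrix Finset

/-!
Substituting `y k = e^{εk} x k`, the equation `T x = λ x` becomes the `μ`-eigenvector equation,
`μ = z λ`, of the path on `N` vertices carrying loops of weights `e^ε` and `e^{-ε}` at its ends:
`y (k - 1) + y (k + 1) = μ y k` inside, `e^ε y 0 + y 1 = μ y 0` and
`y (N - 2) + e^{-ε} y (N - 1) = μ y (N - 1)`. Such an eigenvector is determined by `y 0`, which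
gives simplicity, and `y k = e^{-εk}`, i.e. `x = π`, solves it for `λ = 1`. Writing `μ = r + r⁻¹`,
the interior recurrence factors as `y (k + 1) - r⁻¹ y k = r^k (r - e^ε) y 0`; applying this to both
roots `r` and `r⁻¹` and inserting the right boundary condition yields
`(r - e^ε) (r - e^{-ε}) (r^{2N} - 1) y 0 = 0`. If `|μ| > 2` we may take `|r| > 1`, which leaves
only `r = e^ε`, i.e. `μ = z` and `λ = 1`.
-/

section PathEigenvector

variable {K : Type*} [CommRing K] {a b μ r s : K} {M : ℕ} {y : ℕ → K}

/-- `y 0, …, y (M + 1)` is a `μ`-eigenvector of the adjacency matrix of the path on `M + 2`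
vertices with loops of weights `a` and `b` at its two ends. -/
def IsPathEigenvector (a b μ : K) (M : ℕ) (y : ℕ → K) : Prop :=
  a * y 0 + y 1 = μ * y 0 ∧ (∀ k < M, y k + y (k + 2) = μ * y (k + 1)) ∧
    y M + b * y (M + 1) = μ * y (M + 1)

theorem isPathEigenvector_pow (hab : a * b = 1) : IsPathEigenvector a b (a + b) M (b ^ ·) :=
  ⟨by ring, fun k _ => by linear_combination -b ^ k * hab, by linear_combination -b ^ M * hab⟩

theorem IsPathEigenvector.eq_zero_of_head_eq_zero (h : IsPathEigenvector a b μ M y)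
    (h0 : y 0 = 0) : ∀ k ≤ M + 1, y k = 0 := by
  have hpair : ∀ k ≤ M, y k = 0 ∧ y (k + 1) = 0 := by
    intro k hk
    induction k with
    | zero => exact ⟨h0, by linear_combination h.1 + (μ - a) * h0⟩
    | succ k ih =>
      obtain ⟨hk0, hk1⟩ := ih (by omega)
      exact ⟨hk1, by linear_combination h.2.1 k (by omega) - hk0 + μ * hk1⟩
  rintro (_ | k) hk
  · exact h0
  · exact (hpair k (by omega)).2

/-- For `μ = r + s` with `r s = 1` the recurrence factors as
`y (k + 2) - s y (k + 1) = r (y (k + 1) - s y k)`. -/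
theorem IsPathEigenvector.sub_mul_eq_pow_mul (h : IsPathEigenvector a b μ M y)
    (hrs : r * s = 1) (hμ : r + s = μ) :
    ∀ k ≤ M, y (k + 1) - s * y k = r ^ k * ((r - a) * y 0) := by
  intro k hk
  induction k with
  | zero => linear_combination h.1 - y 0 * hμ
  | succ k ih =>
    linear_combination h.2.1 k (by omega) - y (k + 1) * hμ + y k * hrs + r * ih (by omega)

theorem IsPathEigenvector.eq_or_eq_or_pow_eq_one [IsDomain K] (h : IsPathEigenvector a b μ M y)
    (hab : a * b = 1) (hrs : r * s = 1) (hμ : r + s = μ) (hy : y 0 ≠ 0) :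
    r = a ∨ r = b ∨ r ^ (2 * M + 4) = 1 := by
  have hu := h.sub_mul_eq_pow_mul hrs hμ M le_rfl
  have hv := h.sub_mul_eq_pow_mul (r := s) (s := r) (by rwa [mul_comm]) (by rwa [add_comm]) M le_rfl
  have hpow : r ^ (M + 1) * s ^ (M + 1) = 1 := by rw [← mul_pow, hrs, one_pow]
  have hlast : y M + b * y (M + 1) = (r + s) * y (M + 1) := hμ ▸ h.2.2
  -- by the right boundary equation both sides equal `(b - r) (b - s) y (M + 1)`
  have hcross : r * (b - r) * (y (M + 1) - s * y M) = s * (b - s) * (y (M + 1) - r * y M) := by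
    linear_combination (r - s) * hlast + (r - s) * y M * hrs
  have key : (r - a) * (r - b) * (r ^ (2 * M + 4) - 1) * y 0 = 0 := by
    linear_combination (-r ^ (M + 3)) * (hcross - r * (b - r) * hu + s * (b - s) * hv)
      - r ^ 2 * (b - s) * (s - a) * y 0 * hpow + (r ^ 2 - 1) * y 0 * hab
      - (b * r + a * r - r * s - 1) * y 0 * hrs
  simpa only [mul_eq_zero, sub_eq_zero, hy, or_false, or_assoc] using key

end PathEigenvector

theorem Complex.exists_mul_eq_one_add_eq_of_two_lt_norm {μ : ℂ} (hμ : 2 < ‖μ‖) :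
    ∃ r s : ℂ, r * s = 1 ∧ r + s = μ ∧ 1 < ‖r‖ := by
  obtain ⟨d, hd⟩ := IsAlgClosed.exists_pow_nat_eq (μ ^ 2 - 4) two_pos
  have hprod : (μ + d) / 2 * ((μ - d) / 2) = 1 := by linear_combination -hd / 4
  have hnorm : ‖μ‖ ≤ ‖(μ + d) / 2‖ + ‖(μ - d) / 2‖ := by
    calc ‖μ‖ = ‖(μ + d) / 2 + (μ - d) / 2‖ := by ring_nf
      _ ≤ _ := norm_add_le _ _
  by_cases h : 1 < ‖(μ + d) / 2‖
  · exact ⟨_, _, hprod, by ring, h⟩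
  · exact ⟨_, _, by rw [mul_comm, hprod], by ring, by linarith⟩

theorem IsPathEigenvector.eq_add_of_two_lt_norm {a b μ : ℂ} {M : ℕ} {y : ℕ → ℂ}
    (h : IsPathEigenvector a b μ M y) (hab : a * b = 1) (hb : ‖b‖ < 1) (hy : y 0 ≠ 0)
    (hμ : 2 < ‖μ‖) : μ = a + b := by
  obtain ⟨r, s, hrs, rfl, hr⟩ := Complex.exists_mul_eq_one_add_eq_of_two_lt_norm hμ
  rcases h.eq_or_eq_or_pow_eq_one hab hrs rfl hy with rfl | rfl | hpow
  · rw [mul_left_cancel₀ (left_ne_zero_of_mul_eq_one hab) (hrs.trans hab.symm)]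
  · exact absurd hr hb.not_gt
  · have := congrArg norm hpow
    rw [norm_pow, norm_one] at this
    exact absurd this (one_lt_pow₀ hr (by omega)).ne'

theorem Matrix.mulVec_apply_eq_add {R m ι : Type*} [NonUnitalNonAssocSemiring R] [Fintype ι]
    (A : Matrix m ι R) (x : ι → R) {i : m} {j j' : ι} (hj : j ≠ j')
    (hA : ∀ k, k ≠ j → k ≠ j' → A i k = 0) : (A *ᵥ x) i = A i j * x j + A i j' * x j' :=
  Fintype.sum_eq_add j j' hj fun k hk => by simp [hA k hk.1 hk.2]

section TmatRows

variable {K : Type*} [Field K] (φ : ℝ →+* K) {n M : ℕ} (ε : ℝ) (x : Fin (2 ^ n) → K)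

theorem Tmat_map_mulVec_first (hN : 2 ^ n = M + 2) :
    φ (exp ε + exp (-ε)) * ((Tmat n ε).map φ *ᵥ x) ⟨0, by omega⟩ =
      φ (exp ε) * (x ⟨0, by omega⟩ + x ⟨1, by omega⟩) := by
  have hp : φ (exp ε + exp (-ε)) * φ (exp ε / (exp ε + exp (-ε))) = φ (exp ε) := by
    rw [← map_mul, mul_div_cancel₀ _ (by positivity)]
  rw [mulVec_apply_eq_add _ _ (j := ⟨0, by omega⟩) (j' := ⟨1, by omega⟩) (by simp [Fin.ext_iff])]
  · simp only [map_apply, Tmat, if_pos, if_pos zero_le_one, le_refl]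
    linear_combination (x ⟨0, by omega⟩ + x ⟨1, by omega⟩) * hp
  · intro j hj hj'
    simp only [ne_eq, Fin.ext_iff] at hj hj'
    simp only [map_apply, Tmat, if_pos, if_neg (show ¬(j : ℕ) ≤ 1 by omega), map_zero]

theorem Tmat_map_mulVec_last (hN : 2 ^ n = M + 2) :
    φ (exp ε + exp (-ε)) * ((Tmat n ε).map φ *ᵥ x) ⟨M + 1, by omega⟩ =
      φ (exp (-ε)) * (x ⟨M, by omega⟩ + x ⟨M + 1, by omega⟩) := by
  have hp : φ (exp ε + exp (-ε)) * φ (exp (-ε) / (exp ε + exp (-ε))) = φ (exp (-ε)) := by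
    rw [← map_mul, mul_div_cancel₀ _ (by positivity)]
  have hrow : ¬M + 1 = 0 ∧ M + 1 = 2 ^ n - 1 := by omega
  rw [mulVec_apply_eq_add _ _ (j := ⟨M, by omega⟩) (j' := ⟨M + 1, by omega⟩)
    (by simp [Fin.ext_iff])]
  · simp only [map_apply, Tmat, if_neg hrow.1, if_pos hrow.2, if_pos (show 2 ^ n - 2 ≤ M by omega),
      if_pos (show 2 ^ n - 2 ≤ M + 1 by omega)]
    linear_combination (x ⟨M, by omega⟩ + x ⟨M + 1, by omega⟩) * hp
  · intro j hj hj'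
    simp only [ne_eq, Fin.ext_iff] at hj hj'
    simp only [map_apply, Tmat, if_neg hrow.1, if_pos hrow.2,
      if_neg (show ¬2 ^ n - 2 ≤ (j : ℕ) by omega), map_zero]

theorem Tmat_map_mulVec_middle (hN : 2 ^ n = M + 2) {k : ℕ} (hk : k < M) :
    φ (exp ε + exp (-ε)) * ((Tmat n ε).map φ *ᵥ x) ⟨k + 1, by omega⟩ =
      φ (exp (-ε)) * x ⟨k, by omega⟩ + φ (exp ε) * x ⟨k + 2, by omega⟩ := by
  have hp : φ (exp ε + exp (-ε)) * φ (exp ε / (exp ε + exp (-ε))) = φ (exp ε) := by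
    rw [← map_mul, mul_div_cancel₀ _ (by positivity)]
  have hq : φ (exp ε + exp (-ε)) * φ (exp (-ε) / (exp ε + exp (-ε))) = φ (exp (-ε)) := by
    rw [← map_mul, mul_div_cancel₀ _ (by positivity)]
  have hrow : ¬k + 1 = 0 ∧ ¬k + 1 = 2 ^ n - 1 := by omega
  rw [mulVec_apply_eq_add _ _ (j := ⟨k, by omega⟩) (j' := ⟨k + 2, by omega⟩)
    (by simp [Fin.ext_iff])]
  · simp only [map_apply, Tmat, if_neg hrow.1, if_neg hrow.2, if_pos,
      if_neg (show ¬k + 2 + 1 = k + 1 by omega)]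
    linear_combination x ⟨k, by omega⟩ * hq + x ⟨k + 2, by omega⟩ * hp
  · intro j hj hj'
    simp only [ne_eq, Fin.ext_iff] at hj hj'
    simp only [map_apply, Tmat, if_neg hrow.1, if_neg hrow.2,
      if_neg (show ¬(j : ℕ) + 1 = k + 1 by omega), if_neg (show ¬(j : ℕ) = k + 1 + 1 by omega),
      map_zero]

theorem Tmat_map_mulVec_eq_smul_iff (hN : 2 ^ n = M + 2) (c : K) {y : ℕ → K}
    (hy : ∀ k (hk : k < 2 ^ n), y k = φ (exp ε) ^ k * x ⟨k, hk⟩) :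
    (Tmat n ε).map φ *ᵥ x = c • x ↔
      IsPathEigenvector (φ (exp ε)) (φ (exp (-ε))) (φ (exp ε + exp (-ε)) * c) M y := by
  set e := φ (exp ε)
  set e' := φ (exp (-ε))
  set w := φ (exp ε + exp (-ε))
  have hee : e * e' = 1 := by rw [← map_mul, ← exp_add, add_neg_cancel, exp_zero, map_one]
  have hpow (k : ℕ) : e ^ k * e' ^ k = 1 := by rw [← mul_pow, hee, one_pow]
  constructor
  · intro hx
    have hrow (i) : w * ((Tmat n ε).map φ *ᵥ x) i = w * c * x i := by
      rw [hx, Pi.smul_apply, smul_eq_mul, mul_assoc]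
    refine ⟨?_, fun k hk => ?_, ?_⟩
    · rw [hy 0 (by omega), hy 1 (by omega)]
      linear_combination hrow ⟨0, by omega⟩ - Tmat_map_mulVec_first φ ε x hN
    · rw [hy k (by omega), hy (k + 1) (by omega), hy (k + 2) (by omega)]
      linear_combination
        e ^ (k + 1) * (hrow ⟨k + 1, by omega⟩ - Tmat_map_mulVec_middle φ ε x hN hk)
          - e ^ k * x ⟨k, by omega⟩ * hee
    · rw [hy M (by omega), hy (M + 1) (by omega)]
      linear_combination e ^ (M + 1) * (hrow ⟨M + 1, by omega⟩ - Tmat_map_mulVec_last φ ε x hN)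
        - e ^ M * x ⟨M, by omega⟩ * hee
  · rintro ⟨hfirst, hmid, hlast⟩
    ext ⟨i, hi⟩
    rw [Pi.smul_apply, smul_eq_mul]
    refine mul_left_cancel₀ ((map_ne_zero φ).2 (by positivity) : w ≠ 0) ?_
    rcases i with _ | k
    · rw [hy 0 (by omega), hy 1 (by omega)] at hfirst
      linear_combination Tmat_map_mulVec_first φ ε x hN + hfirst
    obtain rfl | hk := eq_or_ne k M
    · rw [hy k (by omega), hy (k + 1) (by omega)] at hlast
      linear_combination Tmat_map_mulVec_last φ ε x hN + e' ^ (k + 1) * hlast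
        - e' * x ⟨k, by omega⟩ * hpow k - (e' - w * c) * x ⟨k + 1, hi⟩ * hpow (k + 1)
    · have hkM : k < M := by omega
      have hmid := hmid k hkM
      rw [hy k (by omega), hy (k + 1) (by omega), hy (k + 2) (by omega)] at hmid
      linear_combination Tmat_map_mulVec_middle φ ε x hN hkM + e' ^ (k + 1) * hmid
        - e' * x ⟨k, by omega⟩ * hpow k
        - (e * x ⟨k + 2, by omega⟩ - w * c * x ⟨k + 1, hi⟩) * hpow (k + 1)

theorem Tmat_map_eigenvector_head_ne_zero (hN : 2 ^ n = M + 2) {c : K}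
    (hx : (Tmat n ε).map φ *ᵥ x = c • x) (hx0 : x ≠ 0) : x ⟨0, by omega⟩ ≠ 0 := by
  set y : ℕ → K := fun k => if h : k < 2 ^ n then φ (exp ε) ^ k * x ⟨k, h⟩ else 0
  have hpath := (Tmat_map_mulVec_eq_smul_iff φ ε x hN c (y := y) fun k hk => dif_pos hk).1 hx
  intro h0
  refine hx0 (funext fun ⟨k, hk⟩ => ?_)
  have hyk := hpath.eq_zero_of_head_eq_zero (by simpa [y] using h0) k (by omega)
  simpa [y, hk, exp_ne_zero] using hyk

end TmatRows

theorem Matrix.exists_mulVec_eq_smul_of_mem_spectrum {K ι : Type*} [Field K] [Fintype ι]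
    [DecidableEq ι] {A : Matrix ι ι K} {μ : K} (h : μ ∈ spectrum K A) :
    ∃ v ≠ 0, A *ᵥ v = μ • v := by
  rw [← spectrum_toLin', ← Module.End.hasEigenvalue_iff_mem_spectrum] at h
  obtain ⟨v, hv⟩ := h.exists_hasEigenvector
  exact ⟨v, hv.2, by simpa using hv.apply_eq_smul⟩

section Spectrum

variable {n : ℕ} {ε : ℝ}

theorem Tmat_mulVec_exp {M : ℕ} (hN : 2 ^ n = M + 2) :
    Tmat n ε *ᵥ (fun k : Fin (2 ^ n) => Real.exp (-2 * ε * (k : ℕ))) =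
      fun k : Fin (2 ^ n) => Real.exp (-2 * ε * (k : ℕ)) := by
  have hab : exp ε * exp (-ε) = 1 := by rw [← exp_add, add_neg_cancel, exp_zero]
  have := (Tmat_map_mulVec_eq_smul_iff (RingHom.id ℝ) ε
    (fun k : Fin (2 ^ n) => Real.exp (-2 * ε * (k : ℕ))) hN 1 (y := (exp (-ε) ^ ·)) fun k _ => by
      rw [RingHom.id_apply, ← exp_nat_mul, ← exp_nat_mul, ← exp_add]
      ring_nf).2
    (by simpa using isPathEigenvector_pow (M := M) hab)
  simpa using this

theorem Tmat_eigenspace_one (hn : 1 ≤ n) :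
    Module.End.eigenspace (Matrix.toLin' (Tmat n ε)) 1 =
      Submodule.span ℝ {fun k : Fin (2 ^ n) => Real.exp (-2 * ε * (k : ℕ))} := by
  obtain ⟨M, hN⟩ : ∃ M, 2 ^ n = M + 2 :=
    ⟨2 ^ n - 2, by have := Nat.one_lt_two_pow (n := n) (by omega); omega⟩
  set u : Fin (2 ^ n) → ℝ := fun k => Real.exp (-2 * ε * (k : ℕ))
  have hmem (v : Fin (2 ^ n) → ℝ) :
      v ∈ Module.End.eigenspace (toLin' (Tmat n ε)) 1 ↔ Tmat n ε *ᵥ v = v := by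
    simp
  have hu := (hmem u).2 (Tmat_mulVec_exp hN)
  refine le_antisymm (fun v hv => ?_) (Submodule.span_le.2 (Set.singleton_subset_iff.2 hu))
  have hd := (hmem _).1 (sub_mem hv (Submodule.smul_mem _ (v ⟨0, by omega⟩) hu))
  have hd0 : v - v ⟨0, by omega⟩ • u = 0 := by
    by_contra hne
    exact Tmat_map_eigenvector_head_ne_zero (RingHom.id ℝ) ε _ hN (c := 1) (by simpa using hd) hne
      (by simp [u])
  exact Submodule.mem_span_singleton.2 ⟨_, (sub_eq_zero.1 hd0).symm⟩

theorem Tmat_norm_le_of_mem_spectrum (hn : 1 ≤ n) (hε : 0 < ε) {lam : ℂ}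
    (hmem : lam ∈ spectrum ℂ ((Tmat n ε).map (algebraMap ℝ ℂ))) (hlam : lam ≠ 1) :
    ‖lam‖ ≤ 2 / (Real.exp ε + Real.exp (-ε)) := by
  obtain ⟨M, hN⟩ : ∃ M, 2 ^ n = M + 2 :=
    ⟨2 ^ n - 2, by have := Nat.one_lt_two_pow (n := n) (by omega); omega⟩
  obtain ⟨x, hx0, hx⟩ := exists_mulVec_eq_smul_of_mem_spectrum hmem
  set φ := algebraMap ℝ ℂ
  set y : ℕ → ℂ := fun k => if h : k < 2 ^ n then φ (exp ε) ^ k * x ⟨k, h⟩ else 0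
  have hpath := (Tmat_map_mulVec_eq_smul_iff φ ε x hN lam (y := y) fun k hk => dif_pos hk).1 hx
  have hz : 0 < exp ε + exp (-ε) := by positivity
  have hab : φ (exp ε) * φ (exp (-ε)) = 1 := by
    rw [← map_mul, ← exp_add, add_neg_cancel, exp_zero, map_one]
  have hb : ‖φ (exp (-ε))‖ < 1 := by
    rw [norm_algebraMap', Real.norm_of_nonneg (exp_pos _).le]
    exact exp_lt_one_iff.2 (neg_lt_zero.2 hε)
  have hy0 : y 0 ≠ 0 := by simpa [y] using Tmat_map_eigenvector_head_ne_zero φ ε x hN hx hx0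
  by_contra! hlt
  have hμ : 2 < ‖φ (exp ε + exp (-ε)) * lam‖ := by
    rw [norm_mul, norm_algebraMap', Real.norm_of_nonneg hz.le]
    rwa [div_lt_iff₀' hz] at hlt
  have hμ_eq := hpath.eq_add_of_two_lt_norm hab hb hy0 hμ
  rw [← map_add] at hμ_eq
  exact hlam (mul_left_cancel₀ ((map_ne_zero φ).2 hz.ne') (hμ_eq.trans (mul_one _).symm))

end Spectrum

/-- The eigenvalue `1` of `T` is simple: the eigenspace of `T` for eigenvalue `1`
is one-dimensional and spanned by `π` with `π k = e^{-2εk}`; moreover every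
complex eigenvalue `λ ≠ 1` of `T` satisfies `|λ| ≤ 2/z < 1`. -/
theorem tsac_eigenvalue_one_simple (n : ℕ) (hn : 1 ≤ n) (ε : ℝ) (hε : 0 < ε) :
    Module.End.eigenspace (Matrix.toLin' (Tmat n ε)) 1 =
        Submodule.span ℝ {fun k : Fin (2 ^ n) => Real.exp (-2 * ε * (k : ℕ))} ∧
    Module.finrank ℝ (Module.End.eigenspace (Matrix.toLin' (Tmat n ε)) 1) = 1 ∧
    (∀ lam : ℂ, lam ∈ spectrum ℂ ((Tmat n ε).map (algebraMap ℝ ℂ)) → lam ≠ 1 →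
      ‖lam‖ ≤ 2 / (Real.exp ε + Real.exp (-ε))) ∧
    2 / (Real.exp ε + Real.exp (-ε)) < 1 := by
  have hspan := Tmat_eigenspace_one (ε := ε) hn
  refine ⟨hspan, ?_, fun lam hmem hlam => Tmat_norm_le_of_mem_spectrum hn hε hmem hlam, ?_⟩
  · rw [hspan]
    exact finrank_span_singleton (Function.ne_iff.2 ⟨⟨0, Nat.two_pow_pos n⟩, by simp⟩)
  · rw [div_lt_one (by positivity)]
    linarith [Real.cosh_eq ε, Real.one_lt_cosh.2 hε.ne']
end

section
/- For every probability vector v ∈ ℝ^N (nonnegative entries summing to 1), the sequence of iterates T^t v converges as t → ∞ to the normalized optimal asymptotic cooling state p₀·π, where π_k = e^{−2εk} and p₀ = (1 − e^{−2ε})/(1 − e^{−2εN}). -/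
/-!
`Tmat` is column stochastic and is in detailed balance with `π k = e^{-2εk}`, since
`e^ε · e^{-2ε(k+1)} = e^{-ε} · e^{-2εk}`; hence `p₀ • π` is a fixed probability vector. Its power
`T^{2N}` is entrywise positive: walk from `i` down to `0`, wait there on the self-loop, and
walk up to `j`. If all entries of a column-stochastic `S` are at least `δ`, then `S` contracts the
`ℓ¹` norm of vectors of sum zero by the factor `1 - Nδ < 1` (Doeblin), so
`T^t v - p₀ • π = T^t (v - p₀ • π) → 0`.
-/

open Real Matrix Finset

open Filter Topology

theorem tendsto_zero_of_antitone_of_le_mul {d : ℕ → ℝ} (hd : ∀ t, 0 ≤ d t) (hanti : Antitone d)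
    {c : ℝ} (hc : c < 1) {m : ℕ} (hm : ∀ t, d (t + m) ≤ c * d t) : Tendsto d atTop (𝓝 0) := by
  have hL := tendsto_atTop_ciInf hanti ⟨0, Set.forall_mem_range.2 hd⟩
  have hL0 : 0 ≤ ⨅ t, d t := le_ciInf hd
  have hLc : ⨅ t, d t ≤ c * ⨅ t, d t :=
    le_of_tendsto_of_tendsto' (hL.comp (tendsto_add_atTop_nat m)) (hL.const_mul c) hm
  rwa [show ⨅ t, d t = 0 by nlinarith] at hL

namespace Matrix

section Positivity

variable {ι : Type*} [Fintype ι] [DecidableEq ι] {A : Matrix ι ι ℝ}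

theorem pow_add_apply_pos (hA : ∀ i j, 0 ≤ A i j) {a b : ℕ} {i k j : ι}
    (h₁ : 0 < (A ^ a) i k) (h₂ : 0 < (A ^ b) k j) : 0 < (A ^ (a + b)) i j := by
  rw [pow_add, mul_apply]
  exact (mul_pos h₁ h₂).trans_le <| single_le_sum (f := fun l => (A ^ a) i l * (A ^ b) l j)
    (fun l _ => mul_nonneg (pow_apply_nonneg hA a i l) (pow_apply_nonneg hA b l j)) (mem_univ k)

theorem pow_apply_self_pos (hA : ∀ i j, 0 ≤ A i j) {i : ι} (hi : 0 < A i i) (k : ℕ) :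
    0 < (A ^ k) i i := by
  induction k with
  | zero => simp
  | succ k ih => exact pow_add_apply_pos hA ih (by simpa using hi)

end Positivity

section Path

variable {N : ℕ} {A : Matrix (Fin N) (Fin N) ℝ}

theorem pow_apply_pos_of_val_eq_add (hA : ∀ i j, 0 ≤ A i j)
    (hadj : ∀ i j : Fin N, (i : ℕ) + 1 = j ∨ (j : ℕ) + 1 = i → 0 < A i j) (k : ℕ) :
    ∀ i j : Fin N, (j : ℕ) = i + k → 0 < (A ^ k) i j := by
  induction k with
  | zero => intro i j h; simp [Fin.ext h.symm]
  | succ k ih =>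
    intro i j h
    let i' : Fin N := ⟨i + 1, by omega⟩
    rw [add_comm k]
    exact pow_add_apply_pos hA (k := i') (by simpa using hadj i i' (.inl rfl))
      (ih i' j (by simp [i']; omega))

theorem exists_pow_apply_pos (hA : ∀ i j, 0 ≤ A i j)
    (hadj : ∀ i j : Fin N, (i : ℕ) + 1 = j ∨ (j : ℕ) + 1 = i → 0 < A i j) (i j : Fin N) :
    ∃ k < N, 0 < (A ^ k) i j := by
  rcases le_total (i : ℕ) j with h | h
  · exact ⟨j - i, by omega, pow_apply_pos_of_val_eq_add hA hadj _ i j (by omega)⟩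
  · refine ⟨i - j, by omega, ?_⟩
    have hAt : ∀ i j, 0 ≤ Aᵀ i j := fun i j => hA j i
    have := pow_apply_pos_of_val_eq_add hAt (fun i j h => hadj j i h.symm) (i - j) j i
      (by omega)
    rwa [← transpose_pow, transpose_apply] at this

theorem isPrimitive_of_adj_pos (hA : ∀ i j, 0 ≤ A i j)
    (hadj : ∀ i j : Fin N, (i : ℕ) + 1 = j ∨ (j : ℕ) + 1 = i → 0 < A i j)
    {i₀ : Fin N} (hloop : 0 < A i₀ i₀) : A.IsPrimitive := by
  refine ⟨hA, 2 * N, by have := i₀.pos; omega, fun i j => ?_⟩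
  obtain ⟨a, ha, hia⟩ := exists_pow_apply_pos hA hadj i i₀
  obtain ⟨b, hb, hbj⟩ := exists_pow_apply_pos hA hadj i₀ j
  have hsplit : 2 * N = a + (2 * N - a - b) + b := by omega
  rw [hsplit]
  exact pow_add_apply_pos hA (pow_add_apply_pos hA hia (pow_apply_self_pos hA hloop _)) hbj

end Path

section Stochastic

variable {ι : Type*} [Fintype ι]

theorem mulVec_eq_self_of_detailed_balance {R : Type*} [Semiring R] {A : Matrix ι ι R}
    (hA : ∀ j, ∑ i, A i j = 1) {p : ι → R} (hp : ∀ i j, A i j * p j = A j i * p i) :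
    A *ᵥ p = p := by
  funext i
  simp only [mulVec, dotProduct, hp i, ← sum_mul, hA, one_mul]

theorem sum_abs_mulVec_le {A : Matrix ι ι ℝ} (hA : ∀ i j, 0 ≤ A i j) {c : ℝ}
    (hc : ∀ j, ∑ i, A i j ≤ c) (u : ι → ℝ) : ∑ i, |(A *ᵥ u) i| ≤ c * ∑ i, |u i| :=
  calc ∑ i, |(A *ᵥ u) i| ≤ ∑ i, ∑ j, A i j * |u j| := by
        refine sum_le_sum fun i _ => (abs_sum_le_sum_abs _ _).trans_eq ?_
        simp only [abs_mul, abs_of_nonneg (hA _ _)]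
    _ = ∑ j, (∑ i, A i j) * |u j| := by rw [sum_comm]; simp only [sum_mul]
    _ ≤ ∑ j, c * |u j| := sum_le_sum fun j _ => by gcongr; exact hc j
    _ = c * ∑ j, |u j| := (mul_sum _ _ _).symm

variable [DecidableEq ι]

theorem pow_mulVec_eq_self {R : Type*} [Semiring R] {A : Matrix ι ι R} {p : ι → R}
    (hp : A *ᵥ p = p) (t : ℕ) : (A ^ t) *ᵥ p = p := by
  induction t with
  | zero => simp
  | succ t ih => rw [pow_succ', ← mulVec_mulVec, ih, hp]

theorem sum_abs_mulVec_le_of_mem_colStochastic {A : Matrix ι ι ℝ}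
    (hA : A ∈ colStochastic ℝ ι) (u : ι → ℝ) : ∑ i, |(A *ᵥ u) i| ≤ ∑ i, |u i| := by
  simpa using sum_abs_mulVec_le (fun i j => nonneg_of_mem_colStochastic hA (i := i) (j := j))
    (fun j => (sum_col_of_mem_colStochastic hA j).le) u

/-- Doeblin's contraction: on vectors of sum zero, subtracting the constant `δ` from every entry
of `A` does not change `A *ᵥ u`, and leaves a nonnegative matrix with column sums `1 - |ι| δ`. -/
theorem sum_abs_mulVec_le_of_le_apply {A : Matrix ι ι ℝ} (hA : A ∈ colStochastic ℝ ι) {δ : ℝ}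
    (hδ : ∀ i j, δ ≤ A i j) {u : ι → ℝ} (hu : ∑ i, u i = 0) :
    ∑ i, |(A *ᵥ u) i| ≤ (1 - Fintype.card ι * δ) * ∑ i, |u i| := by
  have hshift : A *ᵥ u = (A - of fun _ _ => δ) *ᵥ u := by
    funext i
    simp only [mulVec, dotProduct, sub_apply, of_apply, sub_mul, sum_sub_distrib, ← mul_sum, hu,
      mul_zero, sub_zero]
  rw [hshift]
  refine sum_abs_mulVec_le (fun i j => sub_nonneg.2 (hδ i j)) (fun j => le_of_eq ?_) u
  simp [sum_sub_distrib, sum_col_of_mem_colStochastic hA]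

theorem IsPrimitive.tendsto_pow_mulVec {A : Matrix ι ι ℝ} (hA : A ∈ colStochastic ℝ ι)
    (hprim : A.IsPrimitive) {p : ι → ℝ} (hp : A *ᵥ p = p) {v : ι → ℝ}
    (hv : ∑ i, v i = ∑ i, p i) : Tendsto (fun t => (A ^ t) *ᵥ v) atTop (𝓝 p) := by
  rcases isEmpty_or_nonempty ι with hι | hι
  · exact tendsto_const_nhds.congr fun _ => Subsingleton.elim _ _
  obtain ⟨m, -, hm⟩ := hprim.exists_pos_pow
  obtain ⟨⟨i₀, j₀⟩, hmin⟩ := Finite.exists_min fun ij : ι × ι => (A ^ m) ij.1 ij.2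
  set u := v - p
  have hu : ∑ i, u i = 0 := by simp [u, sum_sub_distrib, hv]
  set d : ℕ → ℝ := fun t => ∑ i, |((A ^ t) *ᵥ u) i|
  have hc : 1 - Fintype.card ι * (A ^ m) i₀ j₀ < 1 :=
    sub_lt_self _ (mul_pos (by exact_mod_cast Fintype.card_pos) (hm i₀ j₀))
  have hd : Tendsto d atTop (𝓝 0) := by
    refine tendsto_zero_of_antitone_of_le_mul (fun t => sum_nonneg fun i _ => abs_nonneg _)
      (antitone_nat_of_succ_le fun t => ?_) hc (m := m) fun t => ?_
    · simpa only [d, pow_succ', ← mulVec_mulVec] using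
        sum_abs_mulVec_le_of_mem_colStochastic hA _
    · have := sum_abs_mulVec_le_of_le_apply (pow_mem hA m) (fun i j => hmin (i, j))
        ((sum_mulVec_of_mem_colStochastic (pow_mem hA t)).trans hu)
      rwa [mulVec_mulVec, ← pow_add, Nat.add_comm m t] at this
  have hdiff : Tendsto (fun t => (A ^ t) *ᵥ u) atTop (𝓝 0) := by
    refine squeeze_zero_norm (fun t => (pi_norm_le_iff_of_nonneg (sum_nonneg fun i _ =>
      abs_nonneg _)).2 fun k => ?_) hd
    exact single_le_sum (f := fun i => |((A ^ t) *ᵥ u) i|) (fun i _ => abs_nonneg _) (mem_univ k)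
  have := hdiff.add_const p
  simpa [u, mulVec_sub, pow_mulVec_eq_self hp] using this

end Stochastic

end Matrix

theorem sum_fin_div_mul_exp_eq_one {x : ℝ} (hx : x ≠ 0) {N : ℕ} (hN : N ≠ 0) :
    ∑ k : Fin N, (1 - exp x) / (1 - exp (x * N)) * exp (x * (k : ℕ)) = 1 := by
  have hr : exp x ≠ 1 := by simpa using hx
  have hrN : exp x ^ N ≠ 1 := by
    rw [← exp_nat_mul]; simpa using ⟨hN, hx⟩
  simp only [← mul_sum, mul_comm x, exp_nat_mul]
  rw [Fin.sum_univ_eq_sum_range (fun k => exp x ^ k), geom_sum_eq hr]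
  field_simp [sub_ne_zero.2 hr, sub_ne_zero.2 hrN, sub_ne_zero.2 hr.symm, sub_ne_zero.2 hrN.symm]
  ring

theorem Fin.sum_ite_val_eq {M : Type*} [AddCommMonoid M] {N c : ℕ} (hc : c < N) (a : M) :
    ∑ i : Fin N, (if (i : ℕ) = c then a else 0) = a := by
  rw [Fin.sum_univ_eq_sum_range (fun i => if i = c then a else 0), sum_ite_eq',
    if_pos (mem_range.2 hc)]

section Tmat

variable {n : ℕ} {ε : ℝ}

theorem Tmat_nonneg (i j : Fin (2 ^ n)) : 0 ≤ Tmat n ε i j := by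
  unfold Tmat; split_ifs <;> positivity

theorem Tmat_apply_of_val_succ_eq {i j : Fin (2 ^ n)} (h : (i : ℕ) + 1 = j) :
    Tmat n ε i j = exp ε / (exp ε + exp (-ε)) := by
  have := j.isLt
  unfold Tmat; split_ifs <;> first | rfl | omega

theorem Tmat_apply_of_val_eq_succ {i j : Fin (2 ^ n)} (h : (i : ℕ) = j + 1) :
    Tmat n ε i j = exp (-ε) / (exp ε + exp (-ε)) := by
  have := i.isLt
  unfold Tmat; split_ifs <;> first | rfl | omega

theorem Tmat_apply_eq_zero {i j : Fin (2 ^ n)} (hij : i ≠ j) (h₁ : (i : ℕ) + 1 ≠ j)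
    (h₂ : (j : ℕ) + 1 ≠ i) : Tmat n ε i j = 0 := by
  have := Fin.val_ne_of_ne hij
  have := j.isLt
  unfold Tmat; split_ifs <;> first | rfl | omega

theorem Tmat_zero_zero_pos (h : 0 < 2 ^ n) : 0 < Tmat n ε ⟨0, h⟩ ⟨0, h⟩ := by
  simp [Tmat]; positivity

theorem isPrimitive_Tmat : (Tmat n ε).IsPrimitive := by
  have hpos : ∀ i j : Fin (2 ^ n), (i : ℕ) + 1 = j ∨ (j : ℕ) + 1 = i → 0 < Tmat n ε i j := by
    rintro i j (h | h)
    · rw [Tmat_apply_of_val_succ_eq h]; positivity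
    · rw [Tmat_apply_of_val_eq_succ h.symm]; positivity
  exact isPrimitive_of_adj_pos Tmat_nonneg hpos (Tmat_zero_zero_pos (by positivity))

/-- Column `j` read as moves out of state `j`; the truncated `j - 1` and the `min` clamp both
moves to `{0, …, N - 1}`. -/
theorem Tmat_apply_eq_ite (hN : 2 ≤ 2 ^ n) (i j : Fin (2 ^ n)) :
    Tmat n ε i j =
      (if (i : ℕ) = (j : ℕ) - 1 then exp ε / (exp ε + exp (-ε)) else 0) +
        if (i : ℕ) = min ((j : ℕ) + 1) (2 ^ n - 1) then exp (-ε) / (exp ε + exp (-ε))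
        else 0 := by
  have := i.isLt; have := j.isLt
  unfold Tmat; split_ifs <;> first | omega | ring

theorem Tmat_mem_colStochastic (hN : 2 ≤ 2 ^ n) :
    Tmat n ε ∈ colStochastic ℝ (Fin (2 ^ n)) := by
  refine mem_colStochastic_iff_sum.2 ⟨Tmat_nonneg, fun j => ?_⟩
  have := j.isLt
  rw [sum_congr rfl fun i _ => Tmat_apply_eq_ite hN i j, sum_add_distrib,
    Fin.sum_ite_val_eq (by omega), Fin.sum_ite_val_eq (by omega), ← add_div,
    div_self (by positivity)]

theorem Tmat_apply_mul_exp_comm (i j : Fin (2 ^ n)) :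
    Tmat n ε i j * exp (-2 * ε * (j : ℕ)) = Tmat n ε j i * exp (-2 * ε * (i : ℕ)) := by
  have key : ∀ k : ℕ, exp ε / (exp ε + exp (-ε)) * exp (-2 * ε * (k + 1 : ℕ)) =
      exp (-ε) / (exp ε + exp (-ε)) * exp (-2 * ε * k) := fun k => by
    rw [div_mul_eq_mul_div, div_mul_eq_mul_div, ← exp_add, ← exp_add]
    push_cast; ring_nf
  rcases eq_or_ne i j with rfl | hij
  · rfl
  by_cases h₁ : (i : ℕ) + 1 = j
  · rw [Tmat_apply_of_val_succ_eq h₁, Tmat_apply_of_val_eq_succ h₁.symm, ← h₁, key]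
  by_cases h₂ : (j : ℕ) + 1 = i
  · rw [Tmat_apply_of_val_eq_succ h₂.symm, Tmat_apply_of_val_succ_eq h₂, ← h₂, key]
  rw [Tmat_apply_eq_zero hij h₁ h₂, Tmat_apply_eq_zero hij.symm h₂ h₁, zero_mul, zero_mul]

end Tmat

/-- For every probability vector `v ∈ ℝ^N`, the iterates `T^t v` converge as
`t → ∞` to the normalized optimal asymptotic cooling state `p₀ • π`, where
`π k = e^{-2εk}` and `p₀ = (1 - e^{-2ε})/(1 - e^{-2εN})`. -/
theorem tsac_converges_to_oas (n : ℕ) (hn : 1 ≤ n) (ε : ℝ) (hε : 0 < ε) :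
    ∀ v : Fin (2 ^ n) → ℝ, (∀ k, 0 ≤ v k) → (∑ k, v k = 1) →
      Filter.Tendsto (fun t : ℕ => (Tmat n ε ^ t).mulVec v) Filter.atTop
        (nhds (fun k : Fin (2 ^ n) =>
          (1 - Real.exp (-2 * ε)) / (1 - Real.exp (-2 * ε * 2 ^ n)) *
            Real.exp (-2 * ε * (k : ℕ)))) := by
  intro v _ hv
  have hN : 2 ≤ 2 ^ n := Nat.le_self_pow (by omega) 2
  have hT := Tmat_mem_colStochastic (ε := ε) hN
  refine isPrimitive_Tmat.tendsto_pow_mulVec hT ?_ ?_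
  · refine mulVec_eq_self_of_detailed_balance (sum_col_of_mem_colStochastic hT) fun i j => ?_
    rw [mul_left_comm, Tmat_apply_mul_exp_comm, mul_left_comm]
  · have := sum_fin_div_mul_exp_eq_one (x := -2 * ε) (by linarith) (N := 2 ^ n) (by positivity)
    push_cast at this
    rw [hv, this]
end

section
/- Let v ∈ ℝ^N be any probability vector and let ξ > 0. If the integer t satisfies t ≥ (z/(z−2))·log(1/(ξ·l)), where l = p₀·e^{−2ε(N−1)} is the smallest entry of the stationary distribution p₀·π, then the total variation distance between T^t v and the stationary distribution is at most ξ: (1/2)·∑_{k=0}^{N−1} |(T^t v)_k − p₀·π_k| ≤ ξ. In particular the mixing time of the TSAC Markov chain is O(2^n). -/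
/-!
Write `S_k x = ∑_{j<k} x_j` for the partial sums of a vector. A step of the walk that moves down
with probability `a` and up with probability `b` acts on them by
`S_{k+1} (T x) = a S_{k+2} x + b S_k x`. Hence for any `r > 0` the weighted sums `G_k = r^k S_k`
satisfy `G'_{k+1} = (a/r) G_{k+2} + (b r) G_k`, and on vectors of total mass zero the potential
`∑ G_k²` contracts by `(a/r + b r)²`; for `T` and `r = e^ε` this is `(2/z)² < 1`.
Apply this to `v - p₀π`, whose partial sums lie in `[-1, 1]`: the total variation distance is at
most `∑ |S_k|`, Cauchy–Schwarz bounds that by the square root of the potential, and the weights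
`r^{±2k}` cost at most a factor `1/l`.
-/

open Real Matrix Finset

noncomputable def walkMatrix (N : ℕ) (a b : ℝ) : Matrix (Fin N) (Fin N) ℝ :=
  fun i j =>
    if (i : ℕ) = 0 then
      if (j : ℕ) ≤ 1 then a else 0
    else if (i : ℕ) = N - 1 then
      if N - 2 ≤ (j : ℕ) then b else 0
    else if (j : ℕ) + 1 = (i : ℕ) then b
    else if (j : ℕ) = (i : ℕ) + 1 then a
    else 0

lemma Tmat_eq_walkMatrix (n : ℕ) (ε : ℝ) :
    Tmat n ε = walkMatrix (2 ^ n) (exp ε / (exp ε + exp (-ε))) (exp (-ε) / (exp ε + exp (-ε))) :=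
  rfl

def partialSum {N : ℕ} (x : Fin N → ℝ) (k : ℕ) : ℝ := ∑ j : Fin N with j.val < k, x j

section

variable {N : ℕ}

@[simp] lemma partialSum_zero (x : Fin N → ℝ) : partialSum x 0 = 0 := by
  simp [partialSum]

lemma partialSum_of_le (x : Fin N → ℝ) {k : ℕ} (hk : N ≤ k) : partialSum x k = ∑ j, x j := by
  rw [partialSum, filter_true_of_mem fun j _ => by omega]

lemma partialSum_succ (x : Fin N → ℝ) {k : ℕ} (hk : k < N) :
    partialSum x (k + 1) = partialSum x k + x ⟨k, hk⟩ := by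
  have hsplit (j : Fin N) : (if (j : ℕ) < k + 1 then x j else 0) =
      (if (j : ℕ) < k then x j else 0) + (if j = ⟨k, hk⟩ then x j else 0) := by
    simp only [Fin.ext_iff]
    split_ifs <;> first | (exfalso; omega) | simp_all
  simp only [partialSum, sum_filter, hsplit, sum_add_distrib, sum_ite_eq', mem_univ, if_true]

lemma partialSum_sub (x y : Fin N → ℝ) (k : ℕ) :
    partialSum (x - y) k = partialSum x k - partialSum y k := by
  simp [partialSum, sum_sub_distrib]

lemma partialSum_nonneg {x : Fin N → ℝ} (hx : ∀ j, 0 ≤ x j) (k : ℕ) : 0 ≤ partialSum x k :=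
  sum_nonneg fun j _ => hx j

lemma partialSum_le_sum {x : Fin N → ℝ} (hx : ∀ j, 0 ≤ x j) (k : ℕ) :
    partialSum x k ≤ ∑ j, x j :=
  sum_le_sum_of_subset_of_nonneg (filter_subset _ _) fun j _ _ => hx j

lemma eq_of_partialSum_eq {x y : Fin N → ℝ} (h : ∀ k ≤ N, partialSum x k = partialSum y k) :
    x = y := by
  funext ⟨i, hi⟩
  have hx := partialSum_succ x hi
  have hy := partialSum_succ y hi
  linarith [h i hi.le, h (i + 1) hi]

lemma partialSum_mulVec (A : Matrix (Fin N) (Fin N) ℝ) (x : Fin N → ℝ) (k : ℕ) :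
    partialSum (A *ᵥ x) k = ∑ j, (∑ i : Fin N with i.val < k, A i j) * x j := by
  simp only [partialSum, mulVec, dotProduct, sum_mul]
  exact sum_comm

lemma sum_filter_ite_val_eq (p : ℕ → Prop) [DecidablePred p] {m : ℕ} (hm : m < N) (c : ℝ) :
    ∑ i : Fin N with p i.val, (if (i : ℕ) = m then c else 0) = if p m then c else 0 := by
  simp_rw [show ∀ i : Fin N, ((i : ℕ) = m ↔ i = ⟨m, hm⟩) from fun i => by simp [Fin.ext_iff]]
  simp [sum_ite_eq']

-- Column `j` sends mass `a` down to `j - 1` and `b` up to `j + 1`; the truncations of `ℕ`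
-- subtraction at `0` and of `min` at `N - 1` are exactly the two boundary rows.
lemma walkMatrix_apply (hN : 2 ≤ N) (a b : ℝ) (i j : Fin N) :
    walkMatrix N a b i j = (if (i : ℕ) = j - 1 then a else 0)
      + (if (i : ℕ) = min ((j : ℕ) + 1) (N - 1) then b else 0) := by
  obtain ⟨i, hi⟩ := i
  obtain ⟨j, hj⟩ := j
  simp only [walkMatrix]
  split_ifs <;> first | (exfalso; omega) | ring

lemma sum_walkMatrix_col (hN : 2 ≤ N) (a b : ℝ) (j : Fin N) (k : ℕ) :
    ∑ i : Fin N with i.val < k, walkMatrix N a b i j =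
      (if (j : ℕ) - 1 < k then a else 0) + (if min ((j : ℕ) + 1) (N - 1) < k then b else 0) := by
  have hd : (j : ℕ) - 1 < N := by omega
  have hu : min ((j : ℕ) + 1) (N - 1) < N := by omega
  simp only [walkMatrix_apply hN, sum_add_distrib, sum_filter_ite_val_eq (· < k) hd,
    sum_filter_ite_val_eq (· < k) hu]

lemma partialSum_walkMatrix_mulVec (hN : 2 ≤ N) (a b : ℝ) (x : Fin N → ℝ) {k : ℕ}
    (hk : k + 2 ≤ N) :
    partialSum (walkMatrix N a b *ᵥ x) (k + 1) = a * partialSum x (k + 2) + b * partialSum x k := by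
  rw [partialSum_mulVec]
  simp only [sum_walkMatrix_col hN, partialSum, sum_filter, mul_sum, ← sum_add_distrib]
  refine sum_congr rfl fun j _ => ?_
  split_ifs <;> first | (exfalso; omega) | ring

lemma sum_walkMatrix_mulVec (hN : 2 ≤ N) {a b : ℝ} (hab : a + b = 1) (x : Fin N → ℝ) :
    ∑ i, (walkMatrix N a b *ᵥ x) i = ∑ j, x j := by
  rw [← partialSum_of_le _ le_rfl, partialSum_mulVec]
  simp only [sum_walkMatrix_col hN]
  refine sum_congr rfl fun j _ => ?_
  rw [if_pos (by omega), if_pos (by omega), hab, one_mul]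

lemma sum_walkMatrix_pow_mulVec (hN : 2 ≤ N) {a b : ℝ} (hab : a + b = 1) (x : Fin N → ℝ)
    (t : ℕ) : ∑ i, (walkMatrix N a b ^ t *ᵥ x) i = ∑ j, x j := by
  induction t with
  | zero => simp
  | succ t ih => rw [pow_succ', ← mulVec_mulVec, sum_walkMatrix_mulVec hN hab, ih]

lemma walkMatrix_mulVec_of_detailed_balance (hN : 2 ≤ N) {a b : ℝ} (hab : a + b = 1)
    (p : ℕ → ℝ) (hp : ∀ k, a * p (k + 1) = b * p k) :
    walkMatrix N a b *ᵥ (fun i : Fin N => p i) = fun i : Fin N => p i := by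
  refine eq_of_partialSum_eq fun m hm => ?_
  rcases m with _ | k
  · simp
  rcases (show k + 2 ≤ N ∨ k + 1 = N by omega) with hk | rfl
  · have h1 := partialSum_succ (fun i : Fin N => p i) (k := k + 1) (by omega)
    have h0 := partialSum_succ (fun i : Fin N => p i) (k := k) (by omega)
    rw [partialSum_walkMatrix_mulVec hN _ _ _ hk]
    linear_combination a * h1 - b * h0 + hp k + partialSum (fun i : Fin N => p i) (k + 1) * hab
  · rw [partialSum_of_le _ le_rfl, partialSum_of_le _ le_rfl, sum_walkMatrix_mulVec hN hab]

lemma mul_add_mul_sq_le {α β : ℝ} (hα : 0 ≤ α) (hβ : 0 ≤ β) (u v : ℝ) :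
    (α * u + β * v) ^ 2 ≤ (α + β) * (α * u ^ 2 + β * v ^ 2) := by
  nlinarith [mul_nonneg (mul_nonneg hα hβ) (sq_nonneg (u - v))]

lemma sum_sq_add_shift_two_le (g : ℕ → ℝ) {α β : ℝ} (hα : 0 ≤ α) (hβ : 0 ≤ β) {M : ℕ}
    (hg : g (M + 1) = 0) :
    ∑ k ∈ range M, (α * g (k + 2) + β * g k) ^ 2 ≤ (α + β) ^ 2 * ∑ k ∈ range (M + 1), g k ^ 2 := by
  have h_low : ∑ k ∈ range M, g k ^ 2 ≤ ∑ k ∈ range (M + 1), g k ^ 2 := by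
    rw [sum_range_succ]; linarith [sq_nonneg (g M)]
  have h_high : ∑ k ∈ range M, g (k + 2) ^ 2 ≤ ∑ k ∈ range (M + 1), g k ^ 2 := by
    have hshift := sum_range_succ' (fun k => g k ^ 2) (M + 1)
    rw [sum_range_succ' (fun k => g (k + 1) ^ 2), sum_range_succ (fun k => g k ^ 2) (M + 1),
      hg] at hshift
    nlinarith [sq_nonneg (g 0), sq_nonneg (g 1)]
  calc ∑ k ∈ range M, (α * g (k + 2) + β * g k) ^ 2
      ≤ ∑ k ∈ range M, (α + β) * (α * g (k + 2) ^ 2 + β * g k ^ 2) :=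
        sum_le_sum fun k _ => mul_add_mul_sq_le hα hβ _ _
    _ = (α + β) * (α * ∑ k ∈ range M, g (k + 2) ^ 2 + β * ∑ k ∈ range M, g k ^ 2) := by
        simp only [mul_sum, ← sum_add_distrib]
    _ ≤ (α + β) * (α * ∑ k ∈ range (M + 1), g k ^ 2 + β * ∑ k ∈ range (M + 1), g k ^ 2) := by
        gcongr
    _ = (α + β) ^ 2 * ∑ k ∈ range (M + 1), g k ^ 2 := by ring

def walkPotential (r : ℝ) (x : Fin N → ℝ) : ℝ := ∑ k ∈ range N, (r ^ k * partialSum x k) ^ 2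

lemma walkPotential_walkMatrix_mulVec_le (hN : 2 ≤ N) {a b r : ℝ} (ha : 0 ≤ a) (hb : 0 ≤ b)
    (hr : 0 < r) {x : Fin N → ℝ} (hx : ∑ j, x j = 0) :
    walkPotential r (walkMatrix N a b *ᵥ x) ≤ (a / r + b * r) ^ 2 * walkPotential r x := by
  obtain ⟨M, rfl⟩ : ∃ M, N = M + 1 := ⟨N - 1, by omega⟩
  have hstep : ∀ k ∈ range M, r ^ (k + 1) * partialSum (walkMatrix (M + 1) a b *ᵥ x) (k + 1) =
      a / r * (r ^ (k + 2) * partialSum x (k + 2)) + b * r * (r ^ k * partialSum x k) := by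
    intro k hk
    rw [partialSum_walkMatrix_mulVec hN _ _ _ (by have := mem_range.1 hk; omega)]
    field_simp
    ring
  rw [walkPotential, sum_range_succ', sum_congr rfl fun k hk => by rw [hstep k hk]]
  rw [partialSum_zero, mul_zero, zero_pow two_ne_zero, add_zero]
  exact sum_sq_add_shift_two_le (fun k => r ^ k * partialSum x k) (by positivity) (by positivity)
    (by simp [partialSum_of_le, hx])

lemma walkPotential_walkMatrix_pow_mulVec_le (hN : 2 ≤ N) {a b r : ℝ} (ha : 0 ≤ a)
    (hb : 0 ≤ b) (hab : a + b = 1) (hr : 0 < r) {x : Fin N → ℝ} (hx : ∑ j, x j = 0) (t : ℕ) :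
    walkPotential r (walkMatrix N a b ^ t *ᵥ x) ≤
      (a / r + b * r) ^ (2 * t) * walkPotential r x := by
  induction t with
  | zero => simp
  | succ t ih =>
    have hxt : ∑ j, (walkMatrix N a b ^ t *ᵥ x) j = 0 := by
      rw [sum_walkMatrix_pow_mulVec hN hab, hx]
    calc walkPotential r (walkMatrix N a b ^ (t + 1) *ᵥ x)
        = walkPotential r (walkMatrix N a b *ᵥ (walkMatrix N a b ^ t *ᵥ x)) := by
          rw [pow_succ', mulVec_mulVec]
      _ ≤ (a / r + b * r) ^ 2 * walkPotential r (walkMatrix N a b ^ t *ᵥ x) :=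
          walkPotential_walkMatrix_mulVec_le hN ha hb hr hxt
      _ ≤ (a / r + b * r) ^ 2 * ((a / r + b * r) ^ (2 * t) * walkPotential r x) := by gcongr
      _ = (a / r + b * r) ^ (2 * (t + 1)) * walkPotential r x := by ring

lemma sum_abs_le_two_mul_sum_abs_partialSum {y : Fin N → ℝ} (hy : ∑ j, y j = 0) :
    ∑ i, |y i| ≤ 2 * ∑ k ∈ range N, |partialSum y k| := by
  have hshift := sum_range_succ' (fun k => |partialSum y k|) N
  rw [sum_range_succ, partialSum_of_le _ le_rfl, hy] at hshift
  calc ∑ i, |y i| = ∑ i : Fin N, |partialSum y (i + 1) - partialSum y i| :=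
        sum_congr rfl fun i _ => by rw [partialSum_succ y i.2]; simp
    _ ≤ ∑ i : Fin N, (|partialSum y (i + 1)| + |partialSum y i|) :=
        sum_le_sum fun i _ => abs_sub _ _
    _ = 2 * ∑ k ∈ range N, |partialSum y k| := by
        rw [Fin.sum_univ_eq_sum_range (fun i => |partialSum y (i + 1)| + |partialSum y i|),
          sum_add_distrib]
        simp only [abs_zero, add_zero, partialSum_zero] at hshift
        linarith

lemma sq_sum_abs_partialSum_le {r : ℝ} (hr : r ≠ 0) (y : Fin N → ℝ) :
    (∑ k ∈ range N, |partialSum y k|) ^ 2 ≤ (∑ k ∈ range N, (r ^ 2)⁻¹ ^ k) * walkPotential r y := by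
  calc (∑ k ∈ range N, |partialSum y k|) ^ 2
      = (∑ k ∈ range N, (r ^ k)⁻¹ * (r ^ k * |partialSum y k|)) ^ 2 := by
        simp only [inv_mul_cancel_left₀ (pow_ne_zero _ hr)]
    _ ≤ (∑ k ∈ range N, (r ^ k)⁻¹ ^ 2) * ∑ k ∈ range N, (r ^ k * |partialSum y k|) ^ 2 :=
        sum_mul_sq_le_sq_mul_sq _ _ _
    _ = (∑ k ∈ range N, (r ^ 2)⁻¹ ^ k) * walkPotential r y := by
        simp only [walkPotential, mul_pow, sq_abs, ← inv_pow, ← pow_mul, mul_comm 2]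

lemma walkPotential_le_of_abs_partialSum_le_one (r : ℝ) {x : Fin N → ℝ}
    (hx : ∀ k, |partialSum x k| ≤ 1) : walkPotential r x ≤ ∑ k ∈ range N, (r ^ 2) ^ k :=
  sum_le_sum fun k _ => by
    rw [mul_pow, ← pow_mul, mul_comm k, pow_mul]
    have : partialSum x k ^ 2 ≤ 1 := by rw [← sq_abs]; nlinarith [hx k, abs_nonneg (partialSum x k)]
    nlinarith [pow_nonneg (sq_nonneg r) k]

theorem walkMatrix_pow_tv_sq_le (hN : 2 ≤ N) {a b r : ℝ} (ha : 0 ≤ a) (hb : 0 ≤ b)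
    (hab : a + b = 1) (hr : 0 < r) {μ v : Fin N → ℝ} (hμ : ∀ k, 0 ≤ μ k) (hμ1 : ∑ k, μ k = 1)
    (hμT : walkMatrix N a b *ᵥ μ = μ) (hv : ∀ k, 0 ≤ v k) (hv1 : ∑ k, v k = 1) (t : ℕ) :
    ((1 / 2) * ∑ k, |(walkMatrix N a b ^ t *ᵥ v) k - μ k|) ^ 2 ≤
      (a / r + b * r) ^ (2 * t) *
        ((∑ k ∈ range N, (r ^ 2)⁻¹ ^ k) * ∑ k ∈ range N, (r ^ 2) ^ k) := by
  set W := walkMatrix N a b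
  have hμW : W ^ t *ᵥ μ = μ := by
    induction t with
    | zero => simp
    | succ t ih => rw [pow_succ, ← mulVec_mulVec, hμT, ih]
  have hx : ∑ j, (v - μ) j = 0 := by simp [sum_sub_distrib, hv1, hμ1]
  have hx1 (k : ℕ) : |partialSum (v - μ) k| ≤ 1 := by
    rw [partialSum_sub]
    exact abs_sub_le_of_nonneg_of_le (partialSum_nonneg hv k) (hv1 ▸ partialSum_le_sum hv k)
      (partialSum_nonneg hμ k) (hμ1 ▸ partialSum_le_sum hμ k)
  set y := W ^ t *ᵥ (v - μ)
  have hy : ∑ j, y j = 0 := by rw [sum_walkMatrix_pow_mulVec hN hab, hx]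
  have hWv : ∀ k, (W ^ t *ᵥ v) k - μ k = y k := by
    simp [y, mulVec_sub, hμW]
  calc ((1 / 2) * ∑ k, |(W ^ t *ᵥ v) k - μ k|) ^ 2
      ≤ (∑ k ∈ range N, |partialSum y k|) ^ 2 := by
        simp only [hWv]
        have htv := sum_abs_le_two_mul_sum_abs_partialSum hy
        gcongr
        linarith
    _ ≤ (∑ k ∈ range N, (r ^ 2)⁻¹ ^ k) * walkPotential r y := sq_sum_abs_partialSum_le hr.ne' y
    _ ≤ (∑ k ∈ range N, (r ^ 2)⁻¹ ^ k) * ((a / r + b * r) ^ (2 * t) * walkPotential r (v - μ)) := by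
        gcongr
        exact walkPotential_walkMatrix_pow_mulVec_le hN ha hb hab hr hx t
    _ ≤ (∑ k ∈ range N, (r ^ 2)⁻¹ ^ k) *
          ((a / r + b * r) ^ (2 * t) * ∑ k ∈ range N, (r ^ 2) ^ k) := by
        gcongr
        exact walkPotential_le_of_abs_partialSum_le_one r hx1
    _ = _ := by ring

end

lemma two_lt_exp_add_exp_neg {ε : ℝ} (hε : ε ≠ 0) : 2 < exp ε + exp (-ε) := by
  have := one_lt_cosh.2 hε
  rw [cosh_eq] at this
  linarith

lemma two_div_pow_le_of_mul_log_le {z c : ℝ} (hz : 2 < z) (hc : 0 < c) {t : ℕ}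
    (ht : z / (z - 2) * log (1 / c) ≤ t) : (2 / z) ^ t ≤ c := by
  have hz0 : 0 < z - 2 := by linarith
  have hlog : log (1 / c) ≤ t * ((z - 2) / z) := by
    have := (le_div_iff₀' (by positivity)).2 ht
    rwa [div_div_eq_mul_div, mul_div_assoc] at this
  have hq : 2 / z ≤ exp (-((z - 2) / z)) := by
    convert add_one_le_exp (-((z - 2) / z)) using 1
    field_simp
    ring
  calc (2 / z) ^ t ≤ exp (-((z - 2) / z)) ^ t := pow_le_pow_left₀ (by positivity) hq t
    _ = exp (-(t * ((z - 2) / z))) := by rw [← exp_nat_mul]; ring_nf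
    _ ≤ exp (-log (1 / c)) := exp_le_exp.2 (neg_le_neg hlog)
    _ = c := by rw [one_div, log_inv, neg_neg, exp_log hc]

lemma sum_pow_mul_sum_inv_pow_le {w : ℝ} (hw0 : 0 < w) (hw1 : w ≤ 1) (N : ℕ) :
    (∑ k ∈ range N, w ^ k) * ∑ k ∈ range N, w⁻¹ ^ k ≤
      ((∑ k ∈ range N, w ^ k) / w ^ (N - 1)) ^ 2 := by
  have hterm : ∀ k ∈ range N, w⁻¹ ^ k ≤ w ^ k / w ^ (2 * (N - 1)) := fun k hk => by
    rw [inv_pow, le_div_iff₀ (by positivity), inv_mul_eq_div, div_le_iff₀ (by positivity),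
      ← pow_add]
    exact pow_le_pow_of_le_one hw0.le hw1 (by have := mem_range.1 hk; omega)
  calc (∑ k ∈ range N, w ^ k) * ∑ k ∈ range N, w⁻¹ ^ k
      ≤ (∑ k ∈ range N, w ^ k) * ∑ k ∈ range N, w ^ k / w ^ (2 * (N - 1)) := by
        gcongr with k hk
        exact hterm k hk
    _ = _ := by rw [← sum_div, div_pow, ← pow_mul, mul_comm (N - 1)]; ring

lemma one_sub_div_one_sub_pow_eq_inv_geom_sum {w : ℝ} (hw : w ≠ 1) (N : ℕ) :
    (1 - w) / (1 - w ^ N) = (∑ j ∈ range N, w ^ j)⁻¹ := by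
  rw [geom_sum_eq hw, inv_div, ← neg_div_neg_eq, neg_sub, neg_sub]

theorem tsac_tv_le {N : ℕ} (hN : 2 ≤ N) {ε : ℝ} (hε : 0 ≤ ε) {v : Fin N → ℝ}
    (hv : ∀ k, 0 ≤ v k) (hv1 : ∑ k, v k = 1) (t : ℕ) :
    (1 / 2) * ∑ k, |(walkMatrix N (exp ε / (exp ε + exp (-ε))) (exp (-ε) / (exp ε + exp (-ε))) ^ t
        *ᵥ v) k - (∑ j ∈ range N, exp (-2 * ε) ^ j)⁻¹ * exp (-2 * ε) ^ (k : ℕ)| ≤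
      (2 / (exp ε + exp (-ε))) ^ t *
        ((∑ j ∈ range N, exp (-2 * ε) ^ j) / exp (-2 * ε) ^ (N - 1)) := by
  set z := exp ε + exp (-ε)
  set w := exp (-2 * ε)
  set Z := ∑ j ∈ range N, w ^ j
  have hz : 0 < z := by positivity
  have hZ : 0 < Z := sum_pos (fun j _ => by positivity) (nonempty_range_iff.2 (by omega))
  have hexp : exp ε * exp (-ε) = 1 := by rw [← exp_add, add_neg_cancel, exp_zero]
  have hw : exp ε * w = exp (-ε) := by
    rw [← exp_add]; ring_nf
  have hr2 : (exp ε ^ 2)⁻¹ = w := by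
    rw [← exp_nat_mul, ← Real.exp_neg]; congr 1; push_cast; ring
  have hab : exp ε / z + exp (-ε) / z = 1 := by rw [← add_div, div_self hz.ne']
  have hrate : exp ε / z / exp ε + exp (-ε) / z * exp ε = 2 / z := by
    field_simp
    linarith
  have hμ1 : ∑ k : Fin N, Z⁻¹ * w ^ (k : ℕ) = 1 := by
    rw [Fin.sum_univ_eq_sum_range (fun k => Z⁻¹ * w ^ k), ← mul_sum, inv_mul_cancel₀ hZ.ne']
  have hμT := walkMatrix_mulVec_of_detailed_balance hN hab (fun k => Z⁻¹ * w ^ k)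
    fun k => by rw [pow_succ, ← hw]; ring
  have h := walkMatrix_pow_tv_sq_le hN (by positivity) (by positivity) hab (exp_pos ε)
    (fun k => by positivity) hμ1 hμT hv hv1 t
  rw [hrate, hr2, ← inv_inv (exp ε ^ 2), hr2] at h
  refine (pow_le_pow_iff_left₀ (by positivity) (by positivity) two_ne_zero).1 (h.trans ?_)
  rw [mul_pow, ← pow_mul, mul_comm t]
  gcongr
  exact sum_pow_mul_sum_inv_pow_le (exp_pos _) (exp_le_one_iff.2 (by linarith)) N

/-- Mixing-time bound for the TSAC Markov chain: for any probability vector `v` and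
any `ξ > 0`, if `t ≥ (z/(z-2))·log(1/(ξ·l))` with `l = p₀·e^{-2ε(N-1)}` the smallest
entry of the stationary distribution `p₀·π`, then the total variation distance
between `T^t v` and `p₀·π` is at most `ξ`. -/
theorem tsac_mixing_time (n : ℕ) (hn : 1 ≤ n) (ε : ℝ) (hε : 0 < ε)
    (v : Fin (2 ^ n) → ℝ) (hv : ∀ k, 0 ≤ v k) (hv1 : ∑ k, v k = 1)
    (ξ : ℝ) (hξ : 0 < ξ) (t : ℕ)
    (ht : (t : ℝ) ≥
      (Real.exp ε + Real.exp (-ε)) / (Real.exp ε + Real.exp (-ε) - 2) *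
        Real.log (1 / (ξ *
          ((1 - Real.exp (-2 * ε)) / (1 - Real.exp (-2 * ε * 2 ^ n)) *
            Real.exp (-2 * ε * (2 ^ n - 1)))))) :
    (1 / 2) * ∑ k, |((Tmat n ε ^ t).mulVec v) k -
        (1 - Real.exp (-2 * ε)) / (1 - Real.exp (-2 * ε * 2 ^ n)) *
          Real.exp (-2 * ε * (k : ℕ))| ≤ ξ := by
  set w := exp (-2 * ε)
  set Z := ∑ j ∈ range (2 ^ n), w ^ j
  have hw0 : 0 < w := exp_pos _
  have hZ : 0 < Z := sum_pos (fun j _ => by positivity) (nonempty_range_iff.2 (by positivity))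
  have hpow (m : ℕ) : exp (-2 * ε * m) = w ^ m := by rw [← exp_nat_mul]; ring_nf
  have hp0 : (1 - w) / (1 - exp (-2 * ε * 2 ^ n)) = Z⁻¹ := by
    rw [show (2 : ℝ) ^ n = ((2 ^ n : ℕ) : ℝ) by push_cast; rfl, hpow]
    exact one_sub_div_one_sub_pow_eq_inv_geom_sum (exp_lt_one_iff.2 (by linarith)).ne _
  have hl : exp (-2 * ε * (2 ^ n - 1)) = w ^ (2 ^ n - 1) := by
    rw [← hpow]; push_cast [Nat.one_le_two_pow]; rfl
  rw [hp0, hl] at ht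
  simp only [hp0, hpow, Tmat_eq_walkMatrix]
  have hrate := two_div_pow_le_of_mul_log_le (two_lt_exp_add_exp_neg hε.ne') (by positivity) ht
  calc _ ≤ (2 / (exp ε + exp (-ε))) ^ t * (Z / w ^ (2 ^ n - 1)) :=
        tsac_tv_le (le_self_pow₀ one_le_two (by omega)) hε.le hv hv1 t
    _ ≤ ξ * (Z⁻¹ * w ^ (2 ^ n - 1)) * (Z / w ^ (2 ^ n - 1)) :=
        mul_le_mul_of_nonneg_right hrate (by positivity)
    _ = ξ := by field_simp [(pow_pos hw0 (2 ^ n - 1)).ne']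
end

section
/- For every vector p ∈ ℝ^N and m = N/2 = 2^{n−1}, the sum of the first half of the entries of T p satisfies the exact identity ∑_{k=0}^{m−1} (Tp)_k = ∑_{k=0}^{m−1} p_k + (e^ε·p_m − e^{−ε}·p_{m−1})/z. -/
open Real Matrix Finset

/-!
`T` is column-stochastic and only moves mass between neighbouring indices, so the mass of
the first half changes only by what crosses the cut between `m - 1` and `m`: a fraction
`e^ε/z` of `p_m` moves down and a fraction `e^{-ε}/z` of `p_{m-1}` moves up. Concretely, on
rows `k < N - 1` one has `(Tp)_k = p_k + f_k - f_{k-1}` with flux `f_k = a p_{k+1} - b p_k`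
(`a = e^ε/z`, `b = e^{-ε}/z`, `a + b = 1`, `f_{-1} = 0`), and the sum telescopes.
-/

def zeroExtend {N : ℕ} (f : Fin N → ℝ) (k : ℕ) : ℝ :=
  if h : k < N then f ⟨k, h⟩ else 0

lemma sum_ite_val_lt_eq_sum_range_zeroExtend {N : ℕ} (f : Fin N → ℝ) (m : ℕ) :
    (∑ k : Fin N, if (k : ℕ) < m then f k else 0) = ∑ k ∈ range m, zeroExtend f k := by
  rw [sum_fin_eq_sum_range]
  apply sum_congr_of_eq_on_inter <;> grind [zeroExtend]

lemma sum_ite_val_eq_zeroExtend {N : ℕ} (f : Fin N → ℝ) (r : ℕ) :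
    (∑ j : Fin N, if (j : ℕ) = r then f j else 0) = zeroExtend f r := by
  rw [sum_fin_eq_sum_range]
  by_cases hr : r < N
  · rw [sum_eq_single_of_mem r (mem_range.2 hr) (by grind)]
    simp [zeroExtend, hr]
  · rw [sum_eq_zero (by grind)]
    simp [zeroExtend, hr]

lemma mulVec_apply_of_row_eq {N : ℕ} (A : Matrix (Fin N) (Fin N) ℝ) (p : Fin N → ℝ) (i : Fin N)
    (r s : ℕ) (α β : ℝ)
    (hA : ∀ j, A i j = (if (j : ℕ) = r then α else 0) + (if (j : ℕ) = s then β else 0)) :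
    (A *ᵥ p) i = α * zeroExtend p r + β * zeroExtend p s := by
  simp only [mulVec, dotProduct, hA, add_mul, ite_mul, zero_mul, sum_add_distrib,
    ← sum_ite_val_eq_zeroExtend, mul_sum, mul_ite, mul_zero]

/-- The rows `k < N - 1` of `T`, acting on zero-extended vectors, where `a = e^ε/z` and
`b = e^{-ε}/z`. -/
def tsacStep (a b : ℝ) (q : ℕ → ℝ) (k : ℕ) : ℝ :=
  if k = 0 then a * (q 0 + q 1) else b * q (k - 1) + a * q (k + 1)

lemma sum_range_tsacStep {a b : ℝ} (hab : a + b = 1) (q : ℕ → ℝ) {m : ℕ} (hm : 0 < m) :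
    ∑ k ∈ range m, tsacStep a b q k = ∑ k ∈ range m, q k + (a * q m - b * q (m - 1)) := by
  obtain ⟨m, rfl⟩ := Nat.exists_eq_add_one_of_ne_zero hm.ne'
  induction m with
  | zero =>
    rw [sum_range_one, sum_range_one, tsacStep, if_pos rfl]
    linear_combination q 0 * hab
  | succ m ih =>
    rw [sum_range_succ, ih m.succ_pos, sum_range_succ q (m + 1)]
    simp only [tsacStep, Nat.add_sub_cancel, m.succ_ne_zero, if_false]
    linear_combination q (m + 1) * hab

section Tmat

variable {n : ℕ} {ε : ℝ}

lemma Tmat_apply_of_val_eq_zero {i : Fin (2 ^ n)} (hi : (i : ℕ) = 0) (j : Fin (2 ^ n)) :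
    Tmat n ε i j = (if (j : ℕ) = 0 then exp ε / (exp ε + exp (-ε)) else 0) +
      (if (j : ℕ) = 1 then exp ε / (exp ε + exp (-ε)) else 0) := by
  simp only [Tmat, hi, if_true]
  split_ifs <;> first | (exfalso; omega) | ring

lemma Tmat_apply_of_ne_zero_of_ne_last {i : Fin (2 ^ n)} (hi₀ : (i : ℕ) ≠ 0)
    (hi : (i : ℕ) ≠ 2 ^ n - 1) (j : Fin (2 ^ n)) :
    Tmat n ε i j = (if (j : ℕ) = i - 1 then exp (-ε) / (exp ε + exp (-ε)) else 0) +
      (if (j : ℕ) = i + 1 then exp ε / (exp ε + exp (-ε)) else 0) := by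
  simp only [Tmat, hi₀, hi, if_false]
  split_ifs <;> first | (exfalso; omega) | ring

lemma zeroExtend_Tmat_mulVec (p : Fin (2 ^ n) → ℝ) {k : ℕ} (hk : k + 1 < 2 ^ n) :
    zeroExtend (Tmat n ε *ᵥ p) k =
      tsacStep (exp ε / (exp ε + exp (-ε))) (exp (-ε) / (exp ε + exp (-ε))) (zeroExtend p) k := by
  rw [zeroExtend, dif_pos (by omega), tsacStep]
  split_ifs with hk₀
  · rw [mul_add]
    exact mulVec_apply_of_row_eq _ _ _ _ _ _ _ (Tmat_apply_of_val_eq_zero hk₀)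
  · exact mulVec_apply_of_row_eq _ _ _ _ _ _ _
      (Tmat_apply_of_ne_zero_of_ne_last hk₀ (by dsimp only; omega))

end Tmat

theorem tsac_half_sum_identity_general (n : ℕ) (ε : ℝ)
    (p : Fin (2 ^ n) → ℝ) :
    ∀ (hm : 2 ^ (n - 1) < 2 ^ n) (hm' : 2 ^ (n - 1) - 1 < 2 ^ n),
      (∑ k : Fin (2 ^ n), if (k : ℕ) < 2 ^ (n - 1) then (Tmat n ε).mulVec p k else 0) =
        (∑ k : Fin (2 ^ n), if (k : ℕ) < 2 ^ (n - 1) then p k else 0) +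
          (Real.exp ε * p ⟨2 ^ (n - 1), hm⟩ -
            Real.exp (-ε) * p ⟨2 ^ (n - 1) - 1, hm'⟩) /
            (Real.exp ε + Real.exp (-ε)) := by
  intro hm hm'
  have hab : exp ε / (exp ε + exp (-ε)) + exp (-ε) / (exp ε + exp (-ε)) = 1 := by
    rw [← add_div, div_self (by positivity)]
  rw [sum_ite_val_lt_eq_sum_range_zeroExtend, sum_ite_val_lt_eq_sum_range_zeroExtend,
    sum_congr rfl fun k hk => zeroExtend_Tmat_mulVec p (by grind),
    sum_range_tsacStep hab _ (Nat.two_pow_pos _), zeroExtend, zeroExtend, dif_pos hm, dif_pos hm']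
  ring

/-- Exact identity for the sum of the first half of the entries of `T p`:
with `m = N/2 = 2^{n-1}`,
`∑_{k<m} (Tp)_k = ∑_{k<m} p_k + (e^ε p_m - e^{-ε} p_{m-1})/z`. -/
theorem tsac_half_sum_identity (n : ℕ) (hn : 1 ≤ n) (ε : ℝ) (hε : 0 < ε)
    (p : Fin (2 ^ n) → ℝ) :
    ∀ (hm : 2 ^ (n - 1) < 2 ^ n) (hm' : 2 ^ (n - 1) - 1 < 2 ^ n),
      (∑ k : Fin (2 ^ n), if (k : ℕ) < 2 ^ (n - 1) then (Tmat n ε).mulVec p k else 0) =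
        (∑ k : Fin (2 ^ n), if (k : ℕ) < 2 ^ (n - 1) then p k else 0) +
          (Real.exp ε * p ⟨2 ^ (n - 1), hm⟩ -
            Real.exp (-ε) * p ⟨2 ^ (n - 1) - 1, hm'⟩) /
            (Real.exp ε + Real.exp (-ε)) :=
  tsac_half_sum_identity_general n ε p
end

section
/- (Robustness of TSAC, Theorem 1.) Let p ∈ ℝ^N be a probability vector and m = N/2 = 2^{n−1}. If e^{−ε}·p_{m−1} < e^{ε}·p_m (i.e., the polarization of the first computation qubit is below the heat-bath algorithmic cooling limit), then one iteration of TSAC strictly increases the polarization of the first qubit: ∑_{k=0}^{m−1} (Tp)_k > ∑_{k=0}^{m−1} p_k. -/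
/-!
`T` is one step of a walk on `{0, …, N-1}` in which mass moves down one site with weight
`e^ε/z` and up one site with weight `e^{-ε}/z`, the two ends being reflecting. Summing `(Tp)_k`
over the first half telescopes: the mass of `{0, …, m-1}` changes exactly by the net flow across
the cut between `m-1` and `m`, namely `(e^ε p_m - e^{-ε} p_{m-1}) / z`, which is positive
precisely under the hypothesis.
-/

open Real Matrix Finset

theorem sum_range_walk_eq_sum_range_add_flux {R : Type*} [CommRing R] {a b : R}
    (hab : a + b = 1) {q r : ℕ → R} {m : ℕ} (hm : 1 ≤ m)
    (hr₀ : r 0 = a * q 0 + a * q 1)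
    (hr : ∀ k, 0 < k → k < m → r k = b * q (k - 1) + a * q (k + 1)) :
    ∑ k ∈ range m, r k = ∑ k ∈ range m, q k + (a * q m - b * q (m - 1)) := by
  induction m, hm using Nat.le_induction with
  | base => simp only [sum_range_one, hr₀]; linear_combination q 0 * hab
  | succ m hm ih =>
    rw [sum_range_succ, sum_range_succ, ih fun k hk₀ hk => hr k hk₀ (by omega),
      hr m (by omega) (by omega), Nat.add_sub_cancel]
    linear_combination q m * hab

section ExtendByZero

variable {M : Type*} {N : ℕ}

def extendByZero [Zero M] (f : Fin N → M) (j : ℕ) : M := if h : j < N then f ⟨j, h⟩ else 0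

theorem extendByZero_of_lt [Zero M] (f : Fin N → M) {j : ℕ} (h : j < N) :
    extendByZero f j = f ⟨j, h⟩ := dif_pos h

theorem sum_ite_val_lt_eq_sum_range_extendByZero [AddCommMonoid M] (f : Fin N → M) {m : ℕ}
    (hm : m ≤ N) :
    ∑ k : Fin N, (if (k : ℕ) < m then f k else 0) = ∑ j ∈ range m, extendByZero f j := by
  rw [sum_fin_eq_sum_range, ← sum_range_add_sum_Ico _ hm,
    ← add_zero (∑ j ∈ range m, extendByZero f j)]
  congr 1
  · refine sum_congr rfl fun j hj => ?_
    have hjm := mem_range.1 hj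
    simp only [extendByZero, dif_pos (hjm.trans_le hm), if_pos hjm]
  · refine sum_eq_zero fun j hj => ?_
    simp [(mem_Ico.1 hj).1.not_gt]

end ExtendByZero

section Tmat

variable {n : ℕ} (ε : ℝ) (p : Fin (2 ^ n) → ℝ)

theorem Tmat_mulVec_zero (h : 1 < 2 ^ n) :
    extendByZero (Tmat n ε *ᵥ p) 0 = exp ε / (exp ε + exp (-ε)) * extendByZero p 0 +
      exp ε / (exp ε + exp (-ε)) * extendByZero p 1 := by
  have h0 : 0 < 2 ^ n := by omega
  rw [extendByZero_of_lt _ h0, extendByZero_of_lt _ h0, extendByZero_of_lt _ h, mulVec,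
    dotProduct, Fintype.sum_eq_add ⟨0, h0⟩ ⟨1, h⟩ (by simp [Fin.ext_iff])]
  · simp [Tmat]
  · rintro j ⟨hj₀, hj₁⟩
    simp only [ne_eq, Fin.ext_iff] at hj₀ hj₁
    have hj : ¬ (j : ℕ) ≤ 1 := by omega
    simp [Tmat, hj]

theorem Tmat_mulVec_of_pos {k : ℕ} (hk₀ : 0 < k) (hk : k + 1 < 2 ^ n) :
    extendByZero (Tmat n ε *ᵥ p) k = exp (-ε) / (exp ε + exp (-ε)) * extendByZero p (k - 1) +
      exp ε / (exp ε + exp (-ε)) * extendByZero p (k + 1) := by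
  have hk_ne_zero : k ≠ 0 := hk₀.ne'
  have hk_ne_last : k ≠ 2 ^ n - 1 := by omega
  rw [extendByZero_of_lt _ (by omega), extendByZero_of_lt _ (by omega),
    extendByZero_of_lt _ hk, mulVec, dotProduct,
    Fintype.sum_eq_add ⟨k - 1, by omega⟩ ⟨k + 1, hk⟩ (by simp [Fin.ext_iff])]
  · have hk_succ_succ : k + 1 + 1 ≠ k := by omega
    simp [Tmat, hk_ne_zero, hk_ne_last, hk_succ_succ, Nat.sub_add_cancel hk₀]
  · rintro j ⟨hj₀, hj₁⟩
    simp only [ne_eq, Fin.ext_iff] at hj₀ hj₁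
    have hj : (j : ℕ) + 1 ≠ k := by omega
    simp [Tmat, hk_ne_zero, hk_ne_last, hj, hj₁]

end Tmat

theorem tsac_robust_cooling_general (n : ℕ) (ε : ℝ) (p : Fin (2 ^ n) → ℝ) :
    ∀ (hm : 2 ^ (n - 1) < 2 ^ n) (hm' : 2 ^ (n - 1) - 1 < 2 ^ n),
      Real.exp (-ε) * p ⟨2 ^ (n - 1) - 1, hm'⟩ < Real.exp ε * p ⟨2 ^ (n - 1), hm⟩ →
      (∑ k : Fin (2 ^ n), if (k : ℕ) < 2 ^ (n - 1) then (Tmat n ε).mulVec p k else 0) >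
        (∑ k : Fin (2 ^ n), if (k : ℕ) < 2 ^ (n - 1) then p k else 0) := by
  intro hm hm' hlt
  have hz : 0 < exp ε + exp (-ε) := by positivity
  have hab : exp ε / (exp ε + exp (-ε)) + exp (-ε) / (exp ε + exp (-ε)) = 1 := by
    rw [← add_div, div_self hz.ne']
  have hm₁ : 1 ≤ 2 ^ (n - 1) := Nat.one_le_two_pow
  rw [gt_iff_lt, sum_ite_val_lt_eq_sum_range_extendByZero _ hm.le,
    sum_ite_val_lt_eq_sum_range_extendByZero _ hm.le,
    sum_range_walk_eq_sum_range_add_flux hab hm₁ (Tmat_mulVec_zero ε p (by omega))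
      (fun k hk₀ hk => Tmat_mulVec_of_pos ε p hk₀ (by omega)),
    extendByZero_of_lt _ hm, extendByZero_of_lt _ hm']
  refine lt_add_of_pos_right _ ?_
  rw [div_mul_eq_mul_div, div_mul_eq_mul_div, ← sub_div]
  exact div_pos (sub_pos.2 hlt) hz

/-- Robustness of TSAC (Theorem 1): if `p` is a probability vector whose first-qubit
polarization is below the HBAC limit, i.e. `e^{-ε} p_{m-1} < e^{ε} p_m` with
`m = N/2 = 2^{n-1}`, then one iteration of TSAC strictly increases the polarization
of the first qubit: `∑_{k<m} (Tp)_k > ∑_{k<m} p_k`. -/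
theorem tsac_robust_cooling (n : ℕ) (hn : 1 ≤ n) (ε : ℝ) (hε : 0 < ε)
    (p : Fin (2 ^ n) → ℝ) (hp : ∀ k, 0 ≤ p k) (hp1 : ∑ k, p k = 1) :
    ∀ (hm : 2 ^ (n - 1) < 2 ^ n) (hm' : 2 ^ (n - 1) - 1 < 2 ^ n),
      Real.exp (-ε) * p ⟨2 ^ (n - 1) - 1, hm'⟩ < Real.exp ε * p ⟨2 ^ (n - 1), hm⟩ →
      (∑ k : Fin (2 ^ n), if (k : ℕ) < 2 ^ (n - 1) then (Tmat n ε).mulVec p k else 0) >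
        (∑ k : Fin (2 ^ n), if (k : ℕ) < 2 ^ (n - 1) then p k else 0) :=
  tsac_robust_cooling_general n ε p
end

section
/- Let M = 2^{n+1}, let σ_TS be the permutation of ℤ/Mℤ that fixes 0 and M−1 and swaps 2k−1 ↔ 2k for k = 1,…,M/2 − 1, let τ be the cyclic shift x ↦ x + 1 on ℤ/Mℤ, and let σ' be the permutation of ℤ/Mℤ that swaps 2k ↔ 2k+1 for k = 0,…,M/2 − 2 and fixes M−2 and M−1. Then σ_TS = τ ∘ σ' ∘ τ^{−1}. (σ' is the permutation implemented by a multiple-control Toffoli gate on the first n qubits followed by a NOT on the last qubit, so this identity gives an efficient circuit for the two-sort unitary.) -/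
/-- The two-sort permutation on `ℤ/Mℤ`: it fixes `0` and `M-1` and swaps
`2k-1 ↔ 2k` for `k = 1, …, M/2 - 1`. -/
def sigmaTSZ (M : ℕ) [NeZero M] : ZMod M → ZMod M := fun x =>
  if x.val % 2 = 1 ∧ x.val < M - 1 then x + 1
  else if x.val % 2 = 0 ∧ x.val ≠ 0 then x - 1
  else x

/-- The permutation of `ℤ/Mℤ` implemented by a multiple-control Toffoli gate
followed by a NOT on the last qubit: it swaps `2k ↔ 2k+1` for
`k = 0, …, M/2 - 2` and fixes `M-2` and `M-1`. -/
def sigmaPrime (M : ℕ) [NeZero M] : ZMod M → ZMod M := fun x =>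
  if x.val = M - 2 ∨ x.val = M - 1 then x
  else if x.val % 2 = 0 then x + 1
  else x - 1

lemma two_sort_conjugation_aux (M : ℕ) (hM4 : 4 ≤ M) (hMe : 2 ∣ M) [NeZero M]
    (x : ZMod M) : sigmaTSZ M x = sigmaPrime M (x - 1) + 1 := by
  have hv : x.val < M := ZMod.val_lt x
  have hneg : ((-1 : ZMod M)).val = M - 1 := by
    have h1 : ((M - 1 : ℕ) : ZMod M) = -1 := by
      have : ((M - 1 : ℕ) : ZMod M) = (M : ℕ) - 1 := by
        push_cast [Nat.cast_sub (by omega : 1 ≤ M)]; ring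
      rw [this, ZMod.natCast_self]; ring
    rw [← h1, ZMod.val_natCast, Nat.mod_eq_of_lt (by omega)]
  have hsub : (x - 1).val = (x.val + (M - 1)) % M := by
    rw [sub_eq_add_neg, ZMod.val_add, hneg]
  by_cases h0 : x.val = 0
  · have hsv : (x - 1).val = M - 1 := by
      rw [hsub, h0, Nat.zero_add, Nat.mod_eq_of_lt (by omega)]
    simp only [sigmaTSZ, sigmaPrime, h0, hsv]
    rw [if_pos (Or.inr trivial)]
    simp
  · have hsv : (x - 1).val = x.val - 1 := by
      rw [hsub]
      have : x.val + (M - 1) = (x.val - 1) + M := by omega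
      rw [this, Nat.add_mod_right, Nat.mod_eq_of_lt (by omega)]
    simp only [sigmaTSZ, sigmaPrime, hsv]
    by_cases hpar : x.val % 2 = 1
    · by_cases hlt : x.val < M - 1
      · rw [if_pos ⟨hpar, hlt⟩, if_neg (by omega), if_pos (by omega)]
        ring
      · rw [if_neg (by omega), if_neg (by omega), if_pos (Or.inl (by omega))]
        ring
    · rw [if_neg (by omega), if_pos ⟨by omega, h0⟩,
        if_neg (by omega), if_neg (by omega)]
      ring

/-- Conjugation identity for the two-sort permutation: with `M = 2^{n+1}`,
`τ` the cyclic shift `x ↦ x + 1` on `ℤ/Mℤ`, and `σ'` the Toffoli-NOT permutation,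
one has `σ_TS = τ ∘ σ' ∘ τ⁻¹`, i.e. `σ_TS x = σ'(x - 1) + 1` for all `x`;
this gives an efficient circuit for the two-sort unitary. -/
theorem two_sort_conjugation (n : ℕ) (hn : 1 ≤ n) :
    ∀ x : ZMod (2 ^ (n + 1)),
      sigmaTSZ (2 ^ (n + 1)) x = sigmaPrime (2 ^ (n + 1)) (x - 1) + 1  := by
  intro x
  have hM4 : (4:ℕ) ≤ 2 ^ (n + 1) := by
    calc (4:ℕ) = 2 ^ 2 := by norm_num
    _ ≤ 2 ^ (n + 1) := Nat.pow_le_pow_right (by norm_num) (by omega)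
  exact two_sort_conjugation_aux _ hM4 (dvd_pow_self 2 (Nat.succ_ne_zero n)) x
end

section
/- Let λ ∈ ℝ^{2N} be any vector (the diagonal of the full density matrix on n computation qubits and one reset qubit). Define the reset step ζ ∈ ℝ^{2N} by ζ_{2k} = (λ_{2k} + λ_{2k+1})·e^{ε}/z and ζ_{2k+1} = (λ_{2k} + λ_{2k+1})·e^{−ε}/z for k = 0,…,N−1, and the two-sort step λ' by λ'_j = ζ_{σ(j)} where σ fixes 0 and 2N−1 and swaps 2k−1 ↔ 2k for k = 1,…,N−1. Then the induced map on the computation-qubit diagonal p, defined by p_k = λ_{2k} + λ_{2k+1} and p'_k = λ'_{2k} + λ'_{2k+1}, satisfies p' = T p. -/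
open Real Matrix Finset

/-- The two-sort permutation on `{0, …, M-1}`: it fixes `0` and `M-1` and swaps
`2k-1 ↔ 2k` for every `k = 1, …, M/2 - 1`. -/
def sigmaTS (M : ℕ) : Fin M → Fin M := fun j =>
  if h : (j : ℕ) % 2 = 1 ∧ (j : ℕ) < M - 1 then
    ⟨(j : ℕ) + 1, by have := j.isLt; omega⟩
  else if h' : (j : ℕ) % 2 = 0 ∧ (j : ℕ) ≠ 0 then
    ⟨(j : ℕ) - 1, by have := j.isLt; omega⟩
  else j

/-!
Write `z = e^ε + e^{-ε}`. The reset step puts the weight `p_k` of the `k`-th computation state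
into `ζ_{2k} = p_k e^ε/z` and `ζ_{2k+1} = p_k e^{-ε}/z`. The two-sort step then feeds row `k`
from `ζ_{2k-1} = p_{k-1} e^{-ε}/z` (or `ζ_0` if `k = 0`) and from `ζ_{2k+2} = p_{k+1} e^ε/z`
(or `ζ_{2N-1}` if `k = N-1`), which is exactly the `k`-th row of `T`.
-/

section sigmaTS

variable {N k : ℕ}

theorem sigmaTS_two_mul_of_eq_zero (hk : k = 0) (h : 2 * k < 2 * N) :
    sigmaTS (2 * N) ⟨2 * k, h⟩ = ⟨2 * k, h⟩ := by
  simp only [sigmaTS]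
  rw [dif_neg (by omega), dif_neg (by omega)]

theorem sigmaTS_two_mul_of_ne_zero (hk : k ≠ 0) (h : 2 * k < 2 * N) :
    sigmaTS (2 * N) ⟨2 * k, h⟩ = ⟨2 * (k - 1) + 1, by omega⟩ := by
  simp only [sigmaTS]
  rw [dif_neg (by omega), dif_pos (by omega)]
  exact Fin.ext (by simp only; omega)

theorem sigmaTS_two_mul_add_one_of_lt (hk : k + 1 < N) (h : 2 * k + 1 < 2 * N) :
    sigmaTS (2 * N) ⟨2 * k + 1, h⟩ = ⟨2 * (k + 1), by omega⟩ := by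
  simp only [sigmaTS]
  rw [dif_pos (by omega)]
  exact Fin.ext (by simp only; omega)

theorem sigmaTS_two_mul_add_one_of_eq (hk : k + 1 = N) (h : 2 * k + 1 < 2 * N) :
    sigmaTS (2 * N) ⟨2 * k + 1, h⟩ = ⟨2 * k + 1, h⟩ := by
  simp only [sigmaTS]
  rw [dif_neg (by omega), dif_neg (by omega)]

end sigmaTS

section Tmat

variable {n : ℕ} (ε : ℝ) (p : Fin (2 ^ n) → ℝ) (k : Fin (2 ^ n))

theorem Tmat_mulVec_of_val_eq_zero (hk : (k : ℕ) = 0) (hk1 : (k : ℕ) + 1 < 2 ^ n) :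
    (Tmat n ε *ᵥ p) k =
      Real.exp ε / (Real.exp ε + Real.exp (-ε)) * (p k + p ⟨k + 1, hk1⟩) := by
  rw [mulVec, dotProduct, Fintype.sum_eq_add k ⟨k + 1, hk1⟩ (by simp [Fin.ext_iff])]
  · simp only [Tmat, if_pos hk, if_pos (show (k : ℕ) ≤ 1 by omega),
      if_pos (show (k : ℕ) + 1 ≤ 1 by omega)]
    ring
  · rintro j ⟨hjk, hjk1⟩
    simp only [ne_eq, Fin.ext_iff] at hjk hjk1
    simp only [Tmat, if_pos hk, if_neg (show ¬ (j : ℕ) ≤ 1 by omega), zero_mul]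

theorem Tmat_mulVec_of_val_eq_last (hk0 : (k : ℕ) ≠ 0) (hk : (k : ℕ) = 2 ^ n - 1) :
    (Tmat n ε *ᵥ p) k =
      Real.exp (-ε) / (Real.exp ε + Real.exp (-ε)) * (p ⟨k - 1, by omega⟩ + p k) := by
  rw [mulVec, dotProduct, Fintype.sum_eq_add ⟨k - 1, by omega⟩ k (by simp [Fin.ext_iff]; omega)]
  · simp only [Tmat, if_neg hk0, if_pos hk, if_pos (show 2 ^ n - 2 ≤ (k : ℕ) - 1 by omega),
      if_pos (show 2 ^ n - 2 ≤ (k : ℕ) by omega)]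
    ring
  · rintro j ⟨hjk1, hjk⟩
    simp only [ne_eq, Fin.ext_iff] at hjk hjk1
    simp only [Tmat, if_neg hk0, if_pos hk, if_neg (show ¬ 2 ^ n - 2 ≤ (j : ℕ) by omega),
      zero_mul]

theorem Tmat_mulVec_of_val_ne_zero_of_lt (hk0 : (k : ℕ) ≠ 0) (hk1 : (k : ℕ) + 1 < 2 ^ n) :
    (Tmat n ε *ᵥ p) k =
      Real.exp (-ε) / (Real.exp ε + Real.exp (-ε)) * p ⟨k - 1, by omega⟩ +
        Real.exp ε / (Real.exp ε + Real.exp (-ε)) * p ⟨k + 1, hk1⟩ := by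
  have hkN : (k : ℕ) ≠ 2 ^ n - 1 := by omega
  rw [mulVec, dotProduct,
    Fintype.sum_eq_add ⟨k - 1, by omega⟩ ⟨k + 1, hk1⟩ (by simp [Fin.ext_iff])]
  · simp only [Tmat, if_neg hk0, if_neg hkN, if_pos (show (k : ℕ) - 1 + 1 = k by omega),
      if_neg (show ¬ (k : ℕ) + 1 + 1 = k by omega), if_true]
  · rintro j ⟨hjk1, hjk2⟩
    simp only [ne_eq, Fin.ext_iff] at hjk1 hjk2
    simp only [Tmat, if_neg hk0, if_neg hkN, if_neg (show ¬ (j : ℕ) + 1 = k by omega),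
      if_neg (show ¬ (j : ℕ) = k + 1 by omega), zero_mul]

end Tmat

/-- One full TSAC iteration on the diagonal `λ ∈ ℝ^{2N}` of the density matrix of
`n` computation qubits and one reset qubit — the reset step
`ζ_{2k} = (λ_{2k} + λ_{2k+1}) e^ε/z`, `ζ_{2k+1} = (λ_{2k} + λ_{2k+1}) e^{-ε}/z`,
followed by the two-sort step `λ'_j = ζ_{σ(j)}` — induces on the
computation-qubit diagonal `p_k = λ_{2k} + λ_{2k+1}` exactly the transition
matrix `T`: `p' = T p`. -/
theorem tsac_iteration_is_T (n : ℕ) (hn : 1 ≤ n) (ε : ℝ)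
    (lam ζ lam' : Fin (2 * 2 ^ n) → ℝ) (p p' : Fin (2 ^ n) → ℝ)
    (hζ0 : ∀ k : Fin (2 ^ n), ζ ⟨2 * (k : ℕ), by have := k.isLt; omega⟩ =
      (lam ⟨2 * (k : ℕ), by have := k.isLt; omega⟩ +
        lam ⟨2 * (k : ℕ) + 1, by have := k.isLt; omega⟩) *
        Real.exp ε / (Real.exp ε + Real.exp (-ε)))
    (hζ1 : ∀ k : Fin (2 ^ n), ζ ⟨2 * (k : ℕ) + 1, by have := k.isLt; omega⟩ =
      (lam ⟨2 * (k : ℕ), by have := k.isLt; omega⟩ +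
        lam ⟨2 * (k : ℕ) + 1, by have := k.isLt; omega⟩) *
        Real.exp (-ε) / (Real.exp ε + Real.exp (-ε)))
    (hlam' : ∀ j, lam' j = ζ (sigmaTS (2 * 2 ^ n) j))
    (hp : ∀ k : Fin (2 ^ n), p k =
      lam ⟨2 * (k : ℕ), by have := k.isLt; omega⟩ +
        lam ⟨2 * (k : ℕ) + 1, by have := k.isLt; omega⟩)
    (hp' : ∀ k : Fin (2 ^ n), p' k =
      lam' ⟨2 * (k : ℕ), by have := k.isLt; omega⟩ +
        lam' ⟨2 * (k : ℕ) + 1, by have := k.isLt; omega⟩) :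
    p' = (Tmat n ε).mulVec p := by
  have hN : 2 ≤ 2 ^ n := Nat.le_self_pow (by omega) 2
  have hζ_even (j : ℕ) (hj : j < 2 ^ n) :
      ζ ⟨2 * j, by omega⟩ = p ⟨j, hj⟩ * Real.exp ε / (Real.exp ε + Real.exp (-ε)) := by
    rw [hζ0 ⟨j, hj⟩, hp]
  have hζ_odd (j : ℕ) (hj : j < 2 ^ n) :
      ζ ⟨2 * j + 1, by omega⟩ =
        p ⟨j, hj⟩ * Real.exp (-ε) / (Real.exp ε + Real.exp (-ε)) := by
    rw [hζ1 ⟨j, hj⟩, hp]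
  funext k
  rw [hp' k, hlam', hlam']
  by_cases hk0 : (k : ℕ) = 0
  · rw [sigmaTS_two_mul_of_eq_zero hk0, sigmaTS_two_mul_add_one_of_lt (by omega),
      hζ_even k (by omega), hζ_even (k + 1) (by omega),
      Tmat_mulVec_of_val_eq_zero ε p k hk0 (by omega)]
    ring
  by_cases hkN : (k : ℕ) + 1 = 2 ^ n
  · rw [sigmaTS_two_mul_of_ne_zero hk0, sigmaTS_two_mul_add_one_of_eq hkN,
      hζ_odd (k - 1) (by omega), hζ_odd k (by omega),
      Tmat_mulVec_of_val_eq_last ε p k hk0 (by omega)]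
    ring
  · rw [sigmaTS_two_mul_of_ne_zero hk0, sigmaTS_two_mul_add_one_of_lt (by omega),
      hζ_odd (k - 1) (by omega), hζ_even (k + 1) (by omega),
      Tmat_mulVec_of_val_ne_zero_of_lt ε p k hk0 (by omega)]
    ring
end
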